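/- arXiv:2405.18144 — 10 statements merged into one kernel-verified Lean document; each statement's English description precedes it below -/
import Mathlib

section
/- Fix c ≥ 1 and k > 0 and define h₁(s, l) := √l·|k^s − 1| / √(c^{2s} + l) for s ∈ ℝ and l > 0. Then h₁(s,l) is monotonically non-increasing in s over (−∞, 0) for each fixed l > 0, and monotonically non-decreasing in l over (0, +∞) for each fixed s. -/
/-- `h₁(s,l) = √l·|k^s − 1| / √(c^{2s} + l)` is non-increasing in `s` over
`(−∞, 0)` for fixed `l > 0`, and non-decreasing in `l` over `(0, ∞)` for fixed `s`. -/
theorem h1_monotonicity (c k : ℝ) (hc : 1 ≤ c) (hk : 0 < k) :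
    (∀ l : ℝ, 0 < l → ∀ s₁ s₂ : ℝ, s₁ ≤ s₂ → s₂ < 0 →
      Real.sqrt l * |k ^ s₂ - 1| / Real.sqrt (c ^ (2 * s₂) + l) ≤
        Real.sqrt l * |k ^ s₁ - 1| / Real.sqrt (c ^ (2 * s₁) + l)) ∧
    (∀ s : ℝ, ∀ l₁ l₂ : ℝ, 0 < l₁ → l₁ ≤ l₂ →
      Real.sqrt l₁ * |k ^ s - 1| / Real.sqrt (c ^ (2 * s) + l₁) ≤
        Real.sqrt l₂ * |k ^ s - 1| / Real.sqrt (c ^ (2 * s) + l₂)) := by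
  have hc0 : (0:ℝ) < c := lt_of_lt_of_le one_pos hc
  constructor
  · intro l hl s₁ s₂ h12 h20
    have habs : |k ^ s₂ - 1| ≤ |k ^ s₁ - 1| := by
      rcases le_or_gt 1 k with hk1 | hk1
      · have h1 : k ^ s₁ ≤ k ^ s₂ := Real.rpow_le_rpow_of_exponent_le hk1 h12
        have h2 : k ^ s₂ ≤ 1 := Real.rpow_le_one_of_one_le_of_nonpos hk1 h20.le
        rw [abs_of_nonpos (by linarith), abs_of_nonpos (by linarith)]
        linarith
      · have h1 : k ^ s₂ ≤ k ^ s₁ := Real.rpow_le_rpow_of_exponent_ge hk hk1.le h12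
        have h2 : 1 ≤ k ^ s₂ :=
          Real.one_le_rpow_of_pos_of_le_one_of_nonpos hk hk1.le h20.le
        rw [abs_of_nonneg (by linarith), abs_of_nonneg (by linarith)]
        linarith
    have hden : c ^ (2 * s₁) ≤ c ^ (2 * s₂) :=
      Real.rpow_le_rpow_of_exponent_le hc (by linarith)
    have hd1 : 0 < c ^ (2 * s₁) := Real.rpow_pos_of_pos hc0 _
    apply div_le_div₀ (by positivity)
      (mul_le_mul_of_nonneg_left habs (Real.sqrt_nonneg l))
      (Real.sqrt_pos.mpr (by linarith))
      (Real.sqrt_le_sqrt (by linarith))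
  · intro s l₁ l₂ hl1 hl12
    set a := c ^ (2 * s) with ha
    have ha0 : 0 < a := Real.rpow_pos_of_pos hc0 _
    rw [div_le_div_iff₀ (Real.sqrt_pos.mpr (by linarith)) (Real.sqrt_pos.mpr (by linarith))]
    have key : Real.sqrt l₁ * Real.sqrt (a + l₂) ≤ Real.sqrt l₂ * Real.sqrt (a + l₁) := by
      rw [← Real.sqrt_mul hl1.le, ← Real.sqrt_mul (by linarith)]
      apply Real.sqrt_le_sqrt
      nlinarith
    calc Real.sqrt l₁ * |k ^ s - 1| * Real.sqrt (a + l₂)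
        = |k ^ s - 1| * (Real.sqrt l₁ * Real.sqrt (a + l₂)) := by ring
      _ ≤ |k ^ s - 1| * (Real.sqrt l₂ * Real.sqrt (a + l₁)) :=
          mul_le_mul_of_nonneg_left key (abs_nonneg _)
      _ = Real.sqrt l₂ * |k ^ s - 1| * Real.sqrt (a + l₁) := by ring
end

section
/- Let A be a positive definite matrix of order m+n with SVD A = UΛUᵀ, where m,n ∈ ℕ₊, n = l·m, U is orthogonal, Λ = diag(cλ·1ₘ, λ·1ₙ), c ≥ 1, λ > 0. Let s ∈ ℝ and let ΔΛ = diag(0ₘ, Δλ·1ₙ) with Δλ = (tc−1)λ for some t > 0. Define B := (UΛUᵀ)^s and ΔB := (U(Λ+ΔΛ)Uᵀ)^s − B. Then ⟨B, B+ΔB⟩ / (‖B‖_F · ‖B+ΔB‖_F) = (l·t^s + c^s) / √((1 + l·t^{2s})(l + c^{2s})). -/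
open Matrix

/-- Frobenius norm of a real matrix. -/
noncomputable def frobNorm {m n : Type*} [Fintype m] [Fintype n] (A : Matrix m n ℝ) : ℝ :=
  Real.sqrt (∑ i, ∑ j, (A i j) ^ 2)

/-- Frobenius inner product `⟨A, B⟩ = tr(AᵀB)`. -/
noncomputable def frobInner {m n : Type*} [Fintype m] [Fintype n] (A B : Matrix m n ℝ) : ℝ :=
  (Aᵀ * B).trace

lemma frobInner_conj {k : Type*} [Fintype k] [DecidableEq k]
    (U : Matrix k k ℝ) (hU : Uᵀ * U = 1) (d e : k → ℝ) :
    frobInner (U * Matrix.diagonal d * Uᵀ) (U * Matrix.diagonal e * Uᵀ) = ∑ i, d i * e i := by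
  unfold frobInner
  have h1 : (U * Matrix.diagonal d * Uᵀ)ᵀ = U * Matrix.diagonal d * Uᵀ := by
    simp [Matrix.transpose_mul, Matrix.mul_assoc]
  rw [h1]
  have h2 : (U * Matrix.diagonal d * Uᵀ) * (U * Matrix.diagonal e * Uᵀ)
      = U * (Matrix.diagonal d * Matrix.diagonal e) * Uᵀ := by
    simp only [Matrix.mul_assoc]
    rw [← Matrix.mul_assoc Uᵀ U, hU, Matrix.one_mul]
  rw [h2, Matrix.trace_mul_cycle, ← Matrix.mul_assoc, hU, Matrix.one_mul,
    Matrix.diagonal_mul_diagonal, Matrix.trace_diagonal]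

lemma frobNorm_eq_sqrt_inner {k k' : Type*} [Fintype k] [Fintype k'] (X : Matrix k k' ℝ) :
    frobNorm X = Real.sqrt (frobInner X X) := by
  unfold frobNorm frobInner
  congr 1
  simp [Matrix.trace, Matrix.mul_apply, Matrix.diag, sq]
  rw [Finset.sum_comm]

/-- For `A = U Λ Uᵀ` of order `m + n` (`n = l·m`) with singular values `cλ`
(multiplicity `m`) and `λ` (multiplicity `n`), rescaling the smaller singular value to `tcλ`
yields the cosine `(l·t^s + c^s)/√((1 + l·t^{2s})(l + c^{2s}))` between the `s`-th powers. -/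
theorem cosine_of_singular_value_perturbation
    {m n : ℕ} (hm : 0 < m) (hn : 0 < n) (l : ℝ) (hl : (n : ℝ) = l * m)
    (c lam t s : ℝ) (hc : 1 ≤ c) (hlam : 0 < lam) (ht : 0 < t)
    (U : Matrix (Fin m ⊕ Fin n) (Fin m ⊕ Fin n) ℝ)
    (hU : Uᵀ * U = 1)
    (A : Matrix (Fin m ⊕ Fin n) (Fin m ⊕ Fin n) ℝ)
    (hA : A = U * Matrix.diagonal
      (Sum.elim (fun _ => c * lam) (fun _ => lam)) * Uᵀ)
    (hApd : A.PosDef)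
    (B ΔB : Matrix (Fin m ⊕ Fin n) (Fin m ⊕ Fin n) ℝ)
    (hB : B = U * Matrix.diagonal
      (Sum.elim (fun _ => (c * lam) ^ s) (fun _ => lam ^ s)) * Uᵀ)
    (hΔB : ΔB = U * Matrix.diagonal
      (Sum.elim (fun _ => (c * lam) ^ s) (fun _ => (t * c * lam) ^ s)) * Uᵀ - B) :
    frobInner B (B + ΔB) / (frobNorm B * frobNorm (B + ΔB)) =
      (l * t ^ s + c ^ s) / Real.sqrt ((1 + l * t ^ (2 * s)) * (l + c ^ (2 * s))) := by
  have hBB : B + ΔB = U * Matrix.diagonal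
      (Sum.elim (fun _ => (c * lam) ^ s) (fun _ => (t * c * lam) ^ s)) * Uᵀ := by
    rw [hΔB]; abel
  -- positivity facts
  have hm' : (0:ℝ) < m := by exact_mod_cast hm
  have hn' : (0:ℝ) < n := by exact_mod_cast hn
  have hc0 : (0:ℝ) < c := lt_of_lt_of_le one_pos hc
  have hlpos : 0 < l := by
    by_contra h
    push_neg at h
    nlinarith
  set a := lam ^ s with ha
  set cs := c ^ s with hcs
  set ts := t ^ s with hts
  have ha0 : 0 < a := Real.rpow_pos_of_pos hlam s
  have hcs0 : 0 < cs := Real.rpow_pos_of_pos hc0 s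
  have hts0 : 0 < ts := Real.rpow_pos_of_pos ht s
  have hcl : (c * lam) ^ s = cs * a := Real.mul_rpow hc0.le hlam.le
  have htcl : (t * c * lam) ^ s = ts * (cs * a) := by
    rw [mul_assoc, Real.mul_rpow ht.le (by positivity), hcl]
  have h2c : c ^ (2 * s) = cs ^ 2 := by
    rw [two_mul, Real.rpow_add hc0, sq]
  have h2t : t ^ (2 * s) = ts ^ 2 := by
    rw [two_mul, Real.rpow_add ht, sq]
  -- compute inner products
  rw [frobNorm_eq_sqrt_inner, frobNorm_eq_sqrt_inner, hBB, hB,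
    frobInner_conj U hU, frobInner_conj U hU, frobInner_conj U hU]
  simp only [Fintype.sum_sum_type, Sum.elim_inl, Sum.elim_inr, Finset.sum_const,
    Finset.card_univ, Fintype.card_fin, nsmul_eq_mul, hcl, htcl, h2c, h2t]
  rw [hl]
  -- now a pure real computation
  have e1 : (m:ℝ)*(cs*a*(cs*a)) + l*(m:ℝ)*(a*a) = (a^2*(m:ℝ))*(l+cs^2) := by ring
  have e2 : (m:ℝ)*(cs*a*(cs*a)) + l*(m:ℝ)*(ts*(cs*a)*(ts*(cs*a)))
      = ((a*cs)^2*(m:ℝ))*(1+l*ts^2) := by ring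
  have hsq1 : Real.sqrt ((a^2*(m:ℝ))*(l+cs^2)) = a*Real.sqrt m*Real.sqrt (l+cs^2) := by
    rw [Real.sqrt_mul (by positivity), Real.sqrt_mul (by positivity), Real.sqrt_sq ha0.le]
  have hsq2 : Real.sqrt (((a*cs)^2*(m:ℝ))*(1+l*ts^2))
      = a*cs*Real.sqrt m*Real.sqrt (1+l*ts^2) := by
    rw [Real.sqrt_mul (by positivity), Real.sqrt_mul (by positivity),
      Real.sqrt_sq (by positivity)]
  have hsq3 : Real.sqrt ((1+l*ts^2)*(l+cs^2))
      = Real.sqrt (1+l*ts^2)*Real.sqrt (l+cs^2) := Real.sqrt_mul (by positivity) _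
  rw [e1, e2, hsq1, hsq2, hsq3]
  have hS : Real.sqrt m * Real.sqrt m = (m:ℝ) := Real.mul_self_sqrt hm'.le
  have hP : (0:ℝ) < Real.sqrt (l+cs^2) := Real.sqrt_pos.mpr (by positivity)
  have hQ : (0:ℝ) < Real.sqrt (1+l*ts^2) := Real.sqrt_pos.mpr (by positivity)
  have hSM : (0:ℝ) < Real.sqrt m := Real.sqrt_pos.mpr hm'
  rw [div_eq_div_iff (by positivity) (by positivity)]
  linear_combination (-(l*ts+cs)*(a*a*cs*Real.sqrt (1+l*ts^2)*Real.sqrt (l+cs^2))) * hS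
end

section
/- Fix c ≥ 1, t > 0, and s ∈ ℝ, and define h₂(l) := (l·t^s + c^s) / √((1 + l·t^{2s})(l + c^{2s})) for l > 0. Then h₂ is monotonically non-increasing on (0, (c/t)^s] and monotonically non-decreasing on ((c/t)^s, +∞). -/
private lemma h2_aux_key (a k l₁ l₂ : ℝ) (ha : 0 < a) (hk : 0 < k) (h1 : 0 < l₁)
    (h2 : 0 < l₂)
    (key : (l₂ * a + k) ^ 2 * ((1 + l₁ * a ^ 2) * (l₁ + k ^ 2)) ≤
      (l₁ * a + k) ^ 2 * ((1 + l₂ * a ^ 2) * (l₂ + k ^ 2))) :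
    (l₂ * a + k) / Real.sqrt ((1 + l₂ * a ^ 2) * (l₂ + k ^ 2)) ≤
      (l₁ * a + k) / Real.sqrt ((1 + l₁ * a ^ 2) * (l₁ + k ^ 2)) := by
  have hD1 : (0:ℝ) < (1 + l₁ * a ^ 2) * (l₁ + k ^ 2) := by positivity
  have hD2 : (0:ℝ) < (1 + l₂ * a ^ 2) * (l₂ + k ^ 2) := by positivity
  have hs1 : 0 < Real.sqrt ((1 + l₁ * a ^ 2) * (l₁ + k ^ 2)) := Real.sqrt_pos.mpr hD1
  have hs2 : 0 < Real.sqrt ((1 + l₂ * a ^ 2) * (l₂ + k ^ 2)) := Real.sqrt_pos.mpr hD2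
  have hq1 : Real.sqrt ((1 + l₁ * a ^ 2) * (l₁ + k ^ 2)) ^ 2 = (1 + l₁ * a ^ 2) * (l₁ + k ^ 2) :=
    Real.sq_sqrt hD1.le
  have hq2 : Real.sqrt ((1 + l₂ * a ^ 2) * (l₂ + k ^ 2)) ^ 2 = (1 + l₂ * a ^ 2) * (l₂ + k ^ 2) :=
    Real.sq_sqrt hD2.le
  rw [div_le_div_iff₀ hs2 hs1]
  have hN1 : 0 < l₁ * a + k := by positivity
  have hN2 : 0 < l₂ * a + k := by positivity
  nlinarith [mul_pos hN1 hs2, mul_pos hN2 hs1, key, hq1, hq2,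
    sq_nonneg ((l₁ * a + k) * Real.sqrt ((1 + l₂ * a ^ 2) * (l₂ + k ^ 2)) -
      (l₂ * a + k) * Real.sqrt ((1 + l₁ * a ^ 2) * (l₁ + k ^ 2)))]

/-- `h₂(l) = (l·t^s + c^s)/√((1 + l·t^{2s})(l + c^{2s}))` is non-increasing
on `(0, (c/t)^s]` and non-decreasing on `((c/t)^s, ∞)`. -/
theorem h2_monotonicity (c t s : ℝ) (hc : 1 ≤ c) (ht : 0 < t) :
    (∀ l₁ l₂ : ℝ, 0 < l₁ → l₁ ≤ l₂ → l₂ ≤ (c / t) ^ s →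
      (l₂ * t ^ s + c ^ s) / Real.sqrt ((1 + l₂ * t ^ (2 * s)) * (l₂ + c ^ (2 * s))) ≤
        (l₁ * t ^ s + c ^ s) / Real.sqrt ((1 + l₁ * t ^ (2 * s)) * (l₁ + c ^ (2 * s)))) ∧
    (∀ l₁ l₂ : ℝ, (c / t) ^ s < l₁ → l₁ ≤ l₂ →
      (l₁ * t ^ s + c ^ s) / Real.sqrt ((1 + l₁ * t ^ (2 * s)) * (l₁ + c ^ (2 * s))) ≤
        (l₂ * t ^ s + c ^ s) / Real.sqrt ((1 + l₂ * t ^ (2 * s)) * (l₂ + c ^ (2 * s)))) := by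
  have hc0 : (0:ℝ) < c := lt_of_lt_of_le one_pos hc
  set a := t ^ s with ha_def
  set k := c ^ s with hk_def
  have ha : 0 < a := Real.rpow_pos_of_pos ht s
  have hk : 0 < k := Real.rpow_pos_of_pos hc0 s
  have ht2 : t ^ (2 * s) = a ^ 2 := by
    rw [ha_def, ← Real.rpow_natCast (t ^ s) 2, ← Real.rpow_mul ht.le]
    norm_num [mul_comm]
  have hc2 : c ^ (2 * s) = k ^ 2 := by
    rw [hk_def, ← Real.rpow_natCast (c ^ s) 2, ← Real.rpow_mul hc0.le]
    norm_num [mul_comm]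
  have hct : (c / t) ^ s = k / a := Real.div_rpow hc0.le ht.le s
  rw [ht2, hc2, hct]
  constructor
  · intro l₁ l₂ h1 h12 h2
    apply h2_aux_key a k l₁ l₂ ha hk h1 (h1.trans_le h12)
    have h2' : a * l₂ ≤ k := by
      rw [le_div_iff₀ ha] at h2; linarith [mul_comm l₂ a]
    have h1' : a * l₁ ≤ k := by nlinarith
    have hsign : 0 ≤ k ^ 2 - a ^ 2 * (l₁ * l₂) := by
      nlinarith [mul_le_mul h1' h2' (mul_nonneg ha.le (h1.trans_le h12).le) hk.le]
    nlinarith [mul_nonneg (mul_nonneg (sq_nonneg (1 - a * k)) (sub_nonneg.mpr h12)) hsign]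
  · intro l₁ l₂ h1 h12
    have h1p : 0 < l₁ := lt_of_le_of_lt (div_nonneg hk.le ha.le) h1
    apply h2_aux_key a k l₂ l₁ ha hk (h1p.trans_le h12) h1p
    have h1' : k < a * l₁ := by
      rw [div_lt_iff₀ ha] at h1; linarith [mul_comm l₁ a]
    have h2' : k < a * l₂ := by nlinarith
    have hsign : k ^ 2 - a ^ 2 * (l₁ * l₂) ≤ 0 := by
      nlinarith [mul_le_mul h1'.le h2'.le hk.le (mul_nonneg ha.le h1p.le)]
    nlinarith [mul_nonpos_of_nonneg_of_nonpos
      (mul_nonneg (sq_nonneg (1 - a * k)) (sub_nonneg.mpr h12)) hsign]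
end

section
/- Let A be a positive definite matrix of order m+n with SVD A = UΛUᵀ, where m,n ∈ ℕ₊, n = l·m, U = [u_1,…,u_{m+n}] is orthogonal, Λ = diag(cλ·1ₘ, λ·1ₙ), c ≥ 1000, λ > 0. Let ΔU = [Δu_i], ΔΛ = diag(0ₘ, Δλ·1ₙ), and s ≤ −0.25. Define B := (UΛUᵀ)^s, B₁ := ((U+ΔU)Λ(U+ΔU)ᵀ)^s, and B₂ := (U(Λ+ΔΛ)Uᵀ)^s. If U+ΔU is orthogonal, ‖Δu_i‖₂ ≤ 0.1 and ⟨u_i, Δu_i⟩ ≥ −0.005 for all i, Δλ = (0.02c − 1)λ, and l = (c/0.02)^s, then 2·‖B₁−B‖_F/‖B‖_F ≤ 0.4 ≤ ‖B₂−B‖_F/‖B‖_F, and 6·(1 − ⟨B,B₁⟩/(‖B‖_F‖B₁‖_F)) ≤ 0.06 ≤ 1 − ⟨B,B₂⟩/(‖B‖_F‖B₂‖_F). -/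
open Matrix

/-!
Conjugation by an orthogonal matrix preserves the Frobenius inner product, so everything is
read off the spectra. For `B₁ = V D Vᵀ` with `W = Uᵀ V` orthogonal,
`⟨B, B₁⟩ = ∑ᵢⱼ dᵢ dⱼ Wᵢⱼ² ≥ ∑ᵢ dᵢ² Wᵢᵢ²` and `Wᵢᵢ = 1 + ⟨uᵢ, Δuᵢ⟩ ≥ 0.995`, while
`‖B₁‖ = ‖B‖`; this controls both the relative error and the cosine distance of `B₁`.

For `B₂` both spectra are constant on the two blocks. With `r = (0.02c)^s ≤ 20^(-1/4) < 0.474`,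
the choice of `l` makes the `m`-block carry `r` times the weight `N = n λ^(2s)` of the `n`-block,
so `‖B‖² = (1 + r) N`, `‖B₂ - B‖² = (1 - r)² N`, `⟨B, B₂⟩ = 2 r N` and `‖B₂‖² = r (1 + r) N`:
the relative error is `(1 - r) / √(1 + r)` and the cosine `2 √r / (1 + r)`.
-/

section Frobenius

variable {ι κ : Type*} [Fintype ι] [Fintype κ]

lemma frobInner_comm (X Y : Matrix ι κ ℝ) : frobInner X Y = frobInner Y X := by
  rw [frobInner, frobInner, ← trace_transpose, transpose_mul, transpose_transpose]

lemma frobInner_self (X : Matrix ι κ ℝ) : frobInner X X = ∑ i, ∑ j, X i j ^ 2 := by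
  simp only [frobInner, trace, diag, mul_apply, transpose_apply, sq]
  exact Finset.sum_comm

lemma frobNorm_eq_sqrt_frobInner (X : Matrix ι κ ℝ) : frobNorm X = √(frobInner X X) := by
  rw [frobInner_self, frobNorm]

lemma frobInner_self_nonneg (X : Matrix ι κ ℝ) : 0 ≤ frobInner X X := by
  rw [frobInner_self]; positivity

lemma frobInner_sub_sub (X Y : Matrix ι κ ℝ) :
    frobInner (X - Y) (X - Y) = frobInner X X - 2 * frobInner X Y + frobInner Y Y := by
  have h := frobInner_comm Y X
  simp only [frobInner, transpose_sub, Matrix.sub_mul, Matrix.mul_sub, trace_sub] at h ⊢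
  linarith

lemma mul_frobNorm {k : ℝ} (hk : 0 ≤ k) (X : Matrix ι κ ℝ) :
    k * frobNorm X = √(k ^ 2 * frobInner X X) := by
  rw [frobNorm_eq_sqrt_frobInner, Real.sqrt_mul (sq_nonneg k), Real.sqrt_sq hk]

lemma frobNorm_div_le_of_frobInner_le {X Y : Matrix ι κ ℝ} {k : ℝ} (hk : 0 ≤ k)
    (h : frobInner X X ≤ k ^ 2 * frobInner Y Y) : frobNorm X / frobNorm Y ≤ k := by
  refine div_le_of_le_mul₀ (Real.sqrt_nonneg _) hk ?_
  rw [mul_frobNorm hk, frobNorm_eq_sqrt_frobInner]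
  exact Real.sqrt_le_sqrt h

lemma le_frobNorm_div_of_frobInner_le {X Y : Matrix ι κ ℝ} {k : ℝ} (hk : 0 ≤ k)
    (hY : 0 < frobInner Y Y) (h : k ^ 2 * frobInner Y Y ≤ frobInner X X) :
    k ≤ frobNorm X / frobNorm Y := by
  rw [le_div_iff₀ (by rw [frobNorm_eq_sqrt_frobInner]; positivity), mul_frobNorm hk,
    frobNorm_eq_sqrt_frobInner]
  exact Real.sqrt_le_sqrt h

lemma frobInner_div_le_of_sq_le {X Y : Matrix ι κ ℝ} {k : ℝ} (hk : 0 ≤ k)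
    (h : frobInner X Y ^ 2 ≤ k ^ 2 * (frobInner X X * frobInner Y Y)) :
    frobInner X Y / (frobNorm X * frobNorm Y) ≤ k := by
  have hnorm : frobNorm X * frobNorm Y = √(frobInner X X * frobInner Y Y) := by
    rw [frobNorm_eq_sqrt_frobInner, frobNorm_eq_sqrt_frobInner,
      Real.sqrt_mul (frobInner_self_nonneg X)]
  rw [hnorm]
  refine div_le_of_le_mul₀ (Real.sqrt_nonneg _) hk ?_
  calc frobInner X Y ≤ √(frobInner X Y ^ 2) := by rw [Real.sqrt_sq_eq_abs]; exact le_abs_self _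
    _ ≤ √(k ^ 2 * (frobInner X X * frobInner Y Y)) := Real.sqrt_le_sqrt h
    _ = k * √(frobInner X X * frobInner Y Y) := by rw [Real.sqrt_mul (sq_nonneg k), Real.sqrt_sq hk]

lemma le_frobInner_div_of_frobInner_eq {X Y : Matrix ι κ ℝ} {k : ℝ}
    (hY : frobInner Y Y = frobInner X X) (hX : 0 < frobInner X X)
    (h : k * frobInner X X ≤ frobInner X Y) :
    k ≤ frobInner X Y / (frobNorm X * frobNorm Y) := by
  rwa [frobNorm_eq_sqrt_frobInner, frobNorm_eq_sqrt_frobInner, hY,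
    Real.mul_self_sqrt hX.le, le_div_iff₀ hX]

lemma frobInner_conj_s7 [DecidableEq κ] {U : Matrix ι κ ℝ} (hU : Uᵀ * U = 1) (X Y : Matrix κ κ ℝ) :
    frobInner (U * X * Uᵀ) (U * Y * Uᵀ) = frobInner X Y := by
  have h : (U * X * Uᵀ)ᵀ * (U * Y * Uᵀ) = U * (Xᵀ * Y) * Uᵀ := by
    simp only [transpose_mul, transpose_transpose, Matrix.mul_assoc]
    rw [← Matrix.mul_assoc Uᵀ U, hU, Matrix.one_mul]
  rw [frobInner, frobInner, h, trace_mul_cycle, hU, Matrix.one_mul]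

lemma frobInner_diagonal [DecidableEq ι] (d e : ι → ℝ) :
    frobInner (diagonal d) (diagonal e) = ∑ i, d i * e i := by
  rw [frobInner, diagonal_transpose, diagonal_mul_diagonal, trace_diagonal]

lemma frobInner_diagonal_conj [DecidableEq ι] (d : ι → ℝ) (W : Matrix ι ι ℝ) :
    frobInner (diagonal d) (W * diagonal d * Wᵀ) = ∑ i, ∑ j, d i * d j * W i j ^ 2 := by
  simp only [frobInner, diagonal_transpose, trace, diag_apply]
  refine Finset.sum_congr rfl fun i _ => ?_
  rw [diagonal_mul, mul_apply, Finset.mul_sum]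
  refine Finset.sum_congr rfl fun j _ => ?_
  rw [mul_diagonal, transpose_apply]
  ring

end Frobenius

section Eigenvector

variable {ι : Type*} [Fintype ι] [DecidableEq ι] {U V : Matrix ι ι ℝ} {d : ι → ℝ} {k : ℝ}

lemma sq_mul_frobInner_le_frobInner_conj (hU : Uᵀ * U = 1) (hd : ∀ i, 0 ≤ d i) (hk : 0 ≤ k)
    (hUV : ∀ i, k ≤ (Uᵀ * V) i i) :
    k ^ 2 * frobInner (U * diagonal d * Uᵀ) (U * diagonal d * Uᵀ)
      ≤ frobInner (U * diagonal d * Uᵀ) (V * diagonal d * Vᵀ) := by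
  set W := Uᵀ * V
  have hV : V = U * W := by rw [← Matrix.mul_assoc, mul_eq_one_comm.mp hU, Matrix.one_mul]
  have hVdV : V * diagonal d * Vᵀ = U * (W * diagonal d * Wᵀ) * Uᵀ := by
    rw [hV]; simp only [transpose_mul, Matrix.mul_assoc]
  rw [hVdV, frobInner_conj_s7 hU, frobInner_conj_s7 hU, frobInner_diagonal, frobInner_diagonal_conj,
    Finset.mul_sum]
  refine Finset.sum_le_sum fun i _ => ?_
  have hdd : 0 ≤ d i * d i := mul_nonneg (hd i) (hd i)
  have hkW : k ^ 2 ≤ W i i ^ 2 := pow_le_pow_left₀ hk (hUV i) 2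
  calc k ^ 2 * (d i * d i) ≤ d i * d i * W i i ^ 2 := by nlinarith
    _ ≤ ∑ j, d i * d j * W i j ^ 2 :=
      Finset.single_le_sum (f := fun j => d i * d j * W i j ^ 2)
        (fun j _ => mul_nonneg (mul_nonneg (hd i) (hd j)) (sq_nonneg _)) (Finset.mem_univ i)

lemma frobInner_sub_conj_diagonal_le (hU : Uᵀ * U = 1) (hV : Vᵀ * V = 1) (hd : ∀ i, 0 ≤ d i)
    (hk : 0 ≤ k) (hUV : ∀ i, k ≤ (Uᵀ * V) i i) :
    frobInner (V * diagonal d * Vᵀ - U * diagonal d * Uᵀ)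
        (V * diagonal d * Vᵀ - U * diagonal d * Uᵀ)
      ≤ 2 * (1 - k ^ 2) * frobInner (U * diagonal d * Uᵀ) (U * diagonal d * Uᵀ) := by
  have h := sq_mul_frobInner_le_frobInner_conj hU hd hk hUV
  rw [frobInner_sub_sub, frobInner_comm (V * _ * Vᵀ) (U * _ * Uᵀ), frobInner_conj_s7 hV,
    ← frobInner_conj_s7 hU]
  linarith

lemma sq_le_frobInner_div_conj_diagonal (hU : Uᵀ * U = 1) (hV : Vᵀ * V = 1) (hd : ∀ i, 0 ≤ d i)
    (hk : 0 ≤ k) (hUV : ∀ i, k ≤ (Uᵀ * V) i i)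
    (hpos : 0 < frobInner (U * diagonal d * Uᵀ) (U * diagonal d * Uᵀ)) :
    k ^ 2 ≤ frobInner (U * diagonal d * Uᵀ) (V * diagonal d * Vᵀ)
      / (frobNorm (U * diagonal d * Uᵀ) * frobNorm (V * diagonal d * Vᵀ)) :=
  le_frobInner_div_of_frobInner_eq (by rw [frobInner_conj_s7 hU, frobInner_conj_s7 hV]) hpos
    (sq_mul_frobInner_le_frobInner_conj hU hd hk hUV)

end Eigenvector

section TwoLevel

variable {α β : Type*} [Fintype α] [Fintype β] [DecidableEq α] [DecidableEq β]
  {U : Matrix (α ⊕ β) (α ⊕ β) ℝ}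

lemma frobInner_conj_diagonal_sumElim (hU : Uᵀ * U = 1) (a b a' b' : ℝ) :
    frobInner (U * diagonal (Sum.elim (fun _ => a) (fun _ => b)) * Uᵀ)
      (U * diagonal (Sum.elim (fun _ => a') (fun _ => b')) * Uᵀ)
      = Fintype.card α * (a * a') + Fintype.card β * (b * b') := by
  simp [frobInner_conj_s7 hU, frobInner_diagonal, Fintype.sum_sum_type]

lemma frobInner_sub_conj_diagonal_sumElim (hU : Uᵀ * U = 1) {a b r : ℝ}
    (hw : Fintype.card α * a ^ 2 = r * (Fintype.card β * b ^ 2)) :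
    (1 + r) * frobInner
      (U * diagonal (Sum.elim (fun _ => a) (fun _ => r * b)) * Uᵀ
        - U * diagonal (Sum.elim (fun _ => a) (fun _ => b)) * Uᵀ)
      (U * diagonal (Sum.elim (fun _ => a) (fun _ => r * b)) * Uᵀ
        - U * diagonal (Sum.elim (fun _ => a) (fun _ => b)) * Uᵀ)
      = (1 - r) ^ 2 * frobInner (U * diagonal (Sum.elim (fun _ => a) (fun _ => b)) * Uᵀ)
          (U * diagonal (Sum.elim (fun _ => a) (fun _ => b)) * Uᵀ) := by
  simp only [frobInner_sub_sub, frobInner_conj_diagonal_sumElim hU]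
  linear_combination (-(1 - r) ^ 2) * hw

lemma sq_frobInner_conj_diagonal_sumElim (hU : Uᵀ * U = 1) {a b r : ℝ}
    (hw : Fintype.card α * a ^ 2 = r * (Fintype.card β * b ^ 2)) :
    (1 + r) ^ 2 * frobInner (U * diagonal (Sum.elim (fun _ => a) (fun _ => b)) * Uᵀ)
      (U * diagonal (Sum.elim (fun _ => a) (fun _ => r * b)) * Uᵀ) ^ 2
      = 4 * r * (frobInner (U * diagonal (Sum.elim (fun _ => a) (fun _ => b)) * Uᵀ)
          (U * diagonal (Sum.elim (fun _ => a) (fun _ => b)) * Uᵀ)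
        * frobInner (U * diagonal (Sum.elim (fun _ => a) (fun _ => r * b)) * Uᵀ)
          (U * diagonal (Sum.elim (fun _ => a) (fun _ => r * b)) * Uᵀ)) := by
  simp only [frobInner_conj_diagonal_sumElim hU]
  linear_combination (1 - r) ^ 2 * (Fintype.card α * a ^ 2 - r * (Fintype.card β * b ^ 2)) * hw

end TwoLevel

lemma rpow_le_of_twenty_le {x s : ℝ} (hx : 20 ≤ x) (hs : s ≤ -0.25) : x ^ s ≤ 0.474 := by
  have h20 : x ^ s ≤ (20 : ℝ) ^ (-(1 / 4) : ℝ) :=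
    (Real.rpow_le_rpow_of_nonpos (by norm_num) hx (by linarith)).trans
      (Real.rpow_le_rpow_of_exponent_le (by norm_num) (by norm_num at hs ⊢; linarith))
  have h4 : ((20 : ℝ) ^ (-(1 / 4) : ℝ)) ^ 4 = 1 / 20 := by
    rw [← Real.rpow_natCast, ← Real.rpow_mul (by norm_num)]; norm_num
  refine h20.trans ((pow_le_pow_iff_left₀ (by positivity) (by norm_num) four_ne_zero).mp ?_)
  rw [h4]; norm_num

lemma mul_rpow_sq_eq {m n c lam s : ℝ} (hc : 0 < c) (hlam : 0 < lam)
    (hn : n = (c / 0.02) ^ s * m) :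
    m * ((c * lam) ^ s) ^ 2 = (0.02 * c) ^ s * (n * (lam ^ s) ^ 2) := by
  have hcc : (0.02 * c) ^ s * (c / 0.02) ^ s = c ^ s * c ^ s := by
    rw [← Real.mul_rpow (by positivity) (by positivity), ← Real.mul_rpow hc.le hc.le]
    congr 1; ring
  rw [Real.mul_rpow hc.le hlam.le, hn]
  linear_combination (-(m * (lam ^ s) ^ 2)) * hcc

theorem eigvec_vs_singular_value_quantization_general
    {m n : ℕ} (hm : 0 < m) (l : ℝ) (hl : (n : ℝ) = l * m)
    (c lam s : ℝ) (hc : 1000 ≤ c) (hlam : 0 < lam) (hs : s ≤ -0.25)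
    (hls : l = (c / 0.02) ^ s)
    (U ΔU : Matrix (Fin m ⊕ Fin n) (Fin m ⊕ Fin n) ℝ)
    (hU : Uᵀ * U = 1)
    (hU' : (U + ΔU)ᵀ * (U + ΔU) = 1)
    (hΔUinner : ∀ i, (-0.005 : ℝ) ≤ ∑ j, U j i * ΔU j i)
    (B B₁ B₂ : Matrix (Fin m ⊕ Fin n) (Fin m ⊕ Fin n) ℝ)
    (hB : B = U * Matrix.diagonal
      (Sum.elim (fun _ => (c * lam) ^ s) (fun _ => lam ^ s)) * Uᵀ)
    (hB₁ : B₁ = (U + ΔU) * Matrix.diagonal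
      (Sum.elim (fun _ => (c * lam) ^ s) (fun _ => lam ^ s)) * (U + ΔU)ᵀ)
    (hB₂ : B₂ = U * Matrix.diagonal
      (Sum.elim (fun _ => (c * lam) ^ s) (fun _ => (0.02 * c * lam) ^ s)) * Uᵀ) :
    2 * (frobNorm (B₁ - B) / frobNorm B) ≤ 0.4 ∧
    (0.4 : ℝ) ≤ frobNorm (B₂ - B) / frobNorm B ∧
    6 * (1 - frobInner B B₁ / (frobNorm B * frobNorm B₁)) ≤ 0.06 ∧
    (0.06 : ℝ) ≤ 1 - frobInner B B₂ / (frobNorm B * frobNorm B₂) := by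
  have hc0 : 0 < c := by linarith
  have hm' : (0 : ℝ) < m := by exact_mod_cast hm
  set r := (0.02 * c) ^ s
  have hr0 : 0 < r := by positivity
  have hr : r ≤ 0.474 := rpow_le_of_twenty_le (by linarith) hs
  have hw : (Fintype.card (Fin m) : ℝ) * ((c * lam) ^ s) ^ 2
      = r * (Fintype.card (Fin n) * (lam ^ s) ^ 2) := by
    simpa using mul_rpow_sq_eq hc0 hlam (hl.trans (congrArg (· * (m : ℝ)) hls))
  have hd : ∀ i, 0 ≤ Sum.elim (fun _ : Fin m => (c * lam) ^ s) (fun _ : Fin n => lam ^ s) i := by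
    rintro (i | i) <;> simp only [Sum.elim_inl, Sum.elim_inr] <;> positivity
  have hdiag : ∀ i, (0.995 : ℝ) ≤ (Uᵀ * (U + ΔU)) i i := fun i => by
    have hinner : (Uᵀ * ΔU) i i = ∑ j, U j i * ΔU j i := rfl
    rw [Matrix.mul_add, Matrix.add_apply, hU, one_apply_eq, hinner]
    linarith [hΔUinner i]
  have hBpos : 0 < frobInner B B := by
    rw [hB, frobInner_conj_diagonal_sumElim hU, Fintype.card_fin, Fintype.card_fin]
    exact add_pos_of_pos_of_nonneg (mul_pos hm' (by positivity)) (by positivity)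
  have hBnonneg := frobInner_self_nonneg B
  have he : (0.02 * c * lam) ^ s = r * lam ^ s := Real.mul_rpow (by positivity) hlam.le
  have hB₁B : frobInner (B₁ - B) (B₁ - B) ≤ 2 * (1 - 0.995 ^ 2) * frobInner B B := by
    rw [hB, hB₁]; exact frobInner_sub_conj_diagonal_le hU hU' hd (by norm_num) hdiag
  have hcos₁ : 0.995 ^ 2 ≤ frobInner B B₁ / (frobNorm B * frobNorm B₁) := by
    rw [hB] at hBpos ⊢; rw [hB₁]
    exact sq_le_frobInner_div_conj_diagonal hU hU' hd (by norm_num) hdiag hBpos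
  have hB₂B : (1 + r) * frobInner (B₂ - B) (B₂ - B) = (1 - r) ^ 2 * frobInner B B := by
    rw [hB, hB₂, he]; exact frobInner_sub_conj_diagonal_sumElim hU hw
  have hcos₂ : (1 + r) ^ 2 * frobInner B B₂ ^ 2 = 4 * r * (frobInner B B * frobInner B₂ B₂) := by
    rw [hB, hB₂, he]; exact sq_frobInner_conj_diagonal_sumElim hU hw
  refine ⟨?_, ?_, ?_, ?_⟩
  · linarith [frobNorm_div_le_of_frobInner_le (k := 0.2) (by norm_num)
      (by linarith : frobInner (B₁ - B) (B₁ - B) ≤ 0.2 ^ 2 * frobInner B B)]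
  · refine le_frobNorm_div_of_frobInner_le (by norm_num) hBpos ?_
    nlinarith [mul_le_mul_of_nonneg_left (show 0.16 * (1 + r) ≤ (1 - r) ^ 2 by nlinarith) hBnonneg]
  · linarith
  · have hP := mul_nonneg hBnonneg (frobInner_self_nonneg B₂)
    have hr' : 4 * r ≤ 0.94 ^ 2 * (1 + r) ^ 2 := by nlinarith
    linarith [frobInner_div_le_of_sq_le (X := B) (Y := B₂) (k := 0.94) (by norm_num)
      (by nlinarith [mul_le_mul_of_nonneg_left hr' hP])]

/-- Comparison of eigenvector-matrix perturbation (`B₁`) and singular-value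
perturbation (`B₂`) of a positive definite `A = U Λ Uᵀ` with singular values `cλ`
(multiplicity `m`) and `λ` (multiplicity `n = l·m`), `c ≥ 1000`, `s ≤ −0.25`,
`Δλ = (0.02c − 1)λ`, `l = (c/0.02)^s`. -/
theorem eigvec_vs_singular_value_quantization
    {m n : ℕ} (hm : 0 < m) (hn : 0 < n) (l : ℝ) (hl : (n : ℝ) = l * m)
    (c lam s : ℝ) (hc : 1000 ≤ c) (hlam : 0 < lam) (hs : s ≤ -0.25)
    (hls : l = (c / 0.02) ^ s)
    (U ΔU : Matrix (Fin m ⊕ Fin n) (Fin m ⊕ Fin n) ℝ)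
    (hU : Uᵀ * U = 1)
    (hU' : (U + ΔU)ᵀ * (U + ΔU) = 1)
    (hΔUnorm : ∀ i, Real.sqrt (∑ j, (ΔU j i) ^ 2) ≤ 0.1)
    (hΔUinner : ∀ i, (-0.005 : ℝ) ≤ ∑ j, U j i * ΔU j i)
    (A : Matrix (Fin m ⊕ Fin n) (Fin m ⊕ Fin n) ℝ)
    (hA : A = U * Matrix.diagonal
      (Sum.elim (fun _ => c * lam) (fun _ => lam)) * Uᵀ)
    (hApd : A.PosDef)
    (B B₁ B₂ : Matrix (Fin m ⊕ Fin n) (Fin m ⊕ Fin n) ℝ)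
    (hB : B = U * Matrix.diagonal
      (Sum.elim (fun _ => (c * lam) ^ s) (fun _ => lam ^ s)) * Uᵀ)
    (hB₁ : B₁ = (U + ΔU) * Matrix.diagonal
      (Sum.elim (fun _ => (c * lam) ^ s) (fun _ => lam ^ s)) * (U + ΔU)ᵀ)
    (hB₂ : B₂ = U * Matrix.diagonal
      (Sum.elim (fun _ => (c * lam) ^ s) (fun _ => (0.02 * c * lam) ^ s)) * Uᵀ) :
    2 * (frobNorm (B₁ - B) / frobNorm B) ≤ 0.4 ∧
    (0.4 : ℝ) ≤ frobNorm (B₂ - B) / frobNorm B ∧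
    6 * (1 - frobInner B B₁ / (frobNorm B * frobNorm B₁)) ≤ 0.06 ∧
    (0.06 : ℝ) ≤ 1 - frobInner B B₂ / (frobNorm B * frobNorm B₂) :=
  eigvec_vs_singular_value_quantization_general hm l hl c lam s hc hlam hs hls U ΔU hU hU' hΔUinner
    B B₁ B₂ hB hB₁ hB₂
end

section
/- Let {X_t}_{t=1}^{T} be a sequence of symmetric real matrices of a fixed order, and set A_t := Σ_{s=1}^{t} X_s. Suppose there are sequences of symmetric matrices {Y_t}_{t=1}^{T}, {Z_t}_{t=0}^{T} and real numbers {ρ_t}_{t=0}^{T} satisfying Y_t = Z_{t−1} + X_t, ρ_t = ρ_{t−1} + ‖Y_t − Z_t‖₂, Z_0 = 0, and ρ_0 = 0. Define B_t := ρ_t·I + Z_t, where I is the identity matrix. Then for every t = 1,…,T: B_t ⪰ B_{t−1} + X_t (with B_0 = 0), and A_t ⪯ B_t ⪯ 2ρ_t·I + A_t. -/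
open Matrix

/-- Spectral norm (largest singular value) of a real square matrix, as the operator norm of
the induced map on Euclidean space. -/
noncomputable def specNorm {n : Type*} [Fintype n] [DecidableEq n]
    (A : Matrix n n ℝ) : ℝ :=
  ‖Matrix.toEuclideanCLM (𝕜 := ℝ) A‖

/-!
With `E_t := Y_t − Z_t` (symmetric), the recursions give
`B_t − (B_{t−1} + X_t) = ‖E_t‖₂·I − E_t` and
`(2ρ_t·I + A_t − B_t) − (2ρ_{t−1}·I + A_{t−1} − B_{t−1}) = ‖E_t‖₂·I + E_t`.
Both increments are positive semidefinite because `|xᵀ E x| ≤ ‖E‖₂ ‖x‖²`, and `B_t − A_t` is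
the sum of the first ones, so all three claims follow by telescoping from `t = 0`, where
every term vanishes.
-/

section SpectralNorm

variable {n : Type*} [Fintype n] [DecidableEq n]

theorem abs_dotProduct_mulVec_le_specNorm (S : Matrix n n ℝ) (x : n → ℝ) :
    |x ⬝ᵥ (S *ᵥ x)| ≤ specNorm S * (x ⬝ᵥ x) := by
  set v : EuclideanSpace ℝ n := WithLp.toLp 2 x
  have hquad : x ⬝ᵥ (S *ᵥ x) = inner ℝ v (toEuclideanCLM (𝕜 := ℝ) S v) := by
    rw [EuclideanSpace.inner_eq_star_dotProduct, ofLp_toEuclideanCLM, dotProduct_comm]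
    rfl
  have hnorm : x ⬝ᵥ x = ‖v‖ * ‖v‖ := by
    rw [← real_inner_self_eq_norm_mul_norm, EuclideanSpace.inner_eq_star_dotProduct]
    rfl
  calc |x ⬝ᵥ (S *ᵥ x)| ≤ ‖v‖ * ‖toEuclideanCLM (𝕜 := ℝ) S v‖ :=
        hquad ▸ abs_real_inner_le_norm _ _
    _ ≤ ‖v‖ * (specNorm S * ‖v‖) := by gcongr; exact (toEuclideanCLM (𝕜 := ℝ) S).le_opNorm v
    _ = specNorm S * (x ⬝ᵥ x) := by rw [hnorm]; ring

variable {S : Matrix n n ℝ}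

theorem posSemidef_specNorm_smul_one_sub (hS : S.IsHermitian) :
    (specNorm S • (1 : Matrix n n ℝ) - S).PosSemidef := by
  refine posSemidef_iff_dotProduct_mulVec.mpr
    ⟨(isHermitian_one.smul (IsSelfAdjoint.all _)).sub hS, fun x => ?_⟩
  have := abs_dotProduct_mulVec_le_specNorm S x
  simp only [star_trivial, sub_mulVec, smul_mulVec, one_mulVec, dotProduct_sub, dotProduct_smul,
    smul_eq_mul]
  linarith [le_abs_self (x ⬝ᵥ (S *ᵥ x))]

theorem posSemidef_specNorm_smul_one_add (hS : S.IsHermitian) :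
    (specNorm S • (1 : Matrix n n ℝ) + S).PosSemidef := by
  refine posSemidef_iff_dotProduct_mulVec.mpr
    ⟨(isHermitian_one.smul (IsSelfAdjoint.all _)).add hS, fun x => ?_⟩
  have := abs_dotProduct_mulVec_le_specNorm S x
  simp only [star_trivial, add_mulVec, smul_mulVec, one_mulVec, dotProduct_add, dotProduct_smul,
    smul_eq_mul]
  linarith [neg_abs_le (x ⬝ᵥ (S *ᵥ x))]

end SpectralNorm

theorem Matrix.PosSemidef.of_sub_succ {n R : Type*} [Fintype n] [Ring R] [PartialOrder R]
    [StarRing R] [AddLeftMono R] {f : ℕ → Matrix n n R}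
    (h0 : (f 0).PosSemidef) (hstep : ∀ k, (f (k + 1) - f k).PosSemidef) :
    ∀ k, (f k).PosSemidef
  | 0 => h0
  | k + 1 => sub_add_cancel (f (k + 1)) (f k) ▸ (hstep k).add (of_sub_succ h0 hstep k)

theorem accumulated_error_sandwich_general
    {d : Type*} [Fintype d] [DecidableEq d] (T : ℕ)
    (X Y Z A B : ℕ → Matrix d d ℝ) (ρ : ℕ → ℝ)
    (hYsym : ∀ t, (Y t).IsSymm) (hZsym : ∀ t, (Z t).IsSymm)
    (hA : ∀ t, A t = ∑ s ∈ Finset.Icc 1 t, X s)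
    (hY : ∀ t, Y (t + 1) = Z t + X (t + 1))
    (hρ : ∀ t, ρ (t + 1) = ρ t + specNorm (Y (t + 1) - Z (t + 1)))
    (hZ0 : Z 0 = 0) (hρ0 : ρ 0 = 0)
    (hB : ∀ t, B t = ρ t • (1 : Matrix d d ℝ) + Z t) :
    ∀ t, 1 ≤ t → t ≤ T →
      (B t - (B (t - 1) + X t)).PosSemidef ∧
      (B t - A t).PosSemidef ∧
      ((2 * ρ t) • (1 : Matrix d d ℝ) + A t - B t).PosSemidef := by
  set E : ℕ → Matrix d d ℝ := fun k => Y (k + 1) - Z (k + 1)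
  have hE : ∀ k, (E k).IsHermitian := fun k =>
    isHermitian_iff_isSymm.mpr ((hYsym _).sub (hZsym _))
  have hAsucc : ∀ k, A (k + 1) = A k + X (k + 1) := fun k => by
    rw [hA, hA, Finset.sum_Icc_succ_top (Nat.le_add_left 1 k)]
  have hBstep : ∀ k, B (k + 1) - (B k + X (k + 1)) = specNorm (E k) • 1 - E k := fun k => by
    simp only [E, hB, hρ, hY, add_smul]; abel
  have hBA : ∀ k, (B k - A k).PosSemidef := by
    refine PosSemidef.of_sub_succ (by simpa [hA, hB, hZ0, hρ0] using PosSemidef.zero) fun k => ?_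
    convert posSemidef_specNorm_smul_one_sub (hE k) using 1
    rw [← hBstep, hAsucc]; abel
  have hAB : ∀ k, ((2 * ρ k) • (1 : Matrix d d ℝ) + A k - B k).PosSemidef := by
    refine PosSemidef.of_sub_succ (by simpa [hA, hB, hZ0, hρ0] using PosSemidef.zero) fun k => ?_
    convert posSemidef_specNorm_smul_one_add (hE k) using 1
    simp only [E, hB, hρ, hAsucc, hY, two_mul, add_smul]; abel
  rintro (_ | k) hk -
  · omega
  · refine ⟨?_, hBA _, hAB _⟩
    rw [Nat.add_sub_cancel, hBstep]
    exact posSemidef_specNorm_smul_one_sub (hE k)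

/-- accumulated-error sandwich. Given symmetric `X_t`, `Y_t = Z_{t−1} + X_t`,
`ρ_t = ρ_{t−1} + ‖Y_t − Z_t‖₂`, `Z_0 = 0`, `ρ_0 = 0`, and `B_t = ρ_t·I + Z_t`,
`A_t = Σ_{s=1}^t X_s`, we have `B_t ⪰ B_{t−1} + X_t` and `A_t ⪯ B_t ⪯ 2ρ_t·I + A_t`
for `t = 1, …, T`. -/
theorem accumulated_error_sandwich
    {d : Type*} [Fintype d] [DecidableEq d] (T : ℕ)
    (X Y Z A B : ℕ → Matrix d d ℝ) (ρ : ℕ → ℝ)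
    (hXsym : ∀ t, (X t).IsSymm) (hYsym : ∀ t, (Y t).IsSymm) (hZsym : ∀ t, (Z t).IsSymm)
    (hA : ∀ t, A t = ∑ s ∈ Finset.Icc 1 t, X s)
    (hY : ∀ t, Y (t + 1) = Z t + X (t + 1))
    (hρ : ∀ t, ρ (t + 1) = ρ t + specNorm (Y (t + 1) - Z (t + 1)))
    (hZ0 : Z 0 = 0) (hρ0 : ρ 0 = 0)
    (hB : ∀ t, B t = ρ t • (1 : Matrix d d ℝ) + Z t) :
    ∀ t, 1 ≤ t → t ≤ T →
      (B t - (B (t - 1) + X t)).PosSemidef ∧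
      (B t - A t).PosSemidef ∧
      ((2 * ρ t) • (1 : Matrix d d ℝ) + A t - B t).PosSemidef :=
  accumulated_error_sandwich_general T X Y Z A B ρ hYsym hZsym hA hY hρ hZ0 hρ0 hB
end

section
/- Let f_1,…,f_T be continuously differentiable convex functions on ℝ^d and let H_1,…,H_T be positive definite d×d matrices. Given w_1 ∈ ℝ^d and η > 0, define the iterates w_{t+1} = w_t − η·H_t^{−1} g_t where g_t = ∇f_t(w_t). Then for any w* ∈ ℝ^d: Σ_{t=1}^{T} f_t(w_t) − Σ_{t=1}^{T} f_t(w*) ≤ (1/(2η))·Σ_{t=1}^{T} (‖w_t − w*‖²_{H_t} − ‖w_{t+1} − w*‖²_{H_t}) + (η/2)·Σ_{t=1}^{T} (‖g_t‖*_{H_t})². -/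
/-!
By convexity, `f_t(w_t) - f_t(w*) ≤ ⟨g_t, w_t - w*⟩`. Writing `w_{t+1} - w* = (w_t - w*) - η H_t⁻¹ g_t`
and expanding the `H_t`-quadratic form, the symmetry of `H_t` turns the cross term into
`-2η ⟨g_t, w_t - w*⟩`, so `⟨g_t, w_t - w*⟩` equals the `t`-th summand of the bound exactly.
Summing over `t` gives the theorem.
-/

open Matrix

theorem ConvexOn.apply_sub_le_of_hasFDerivAt {E : Type*} [NormedAddCommGroup E] [NormedSpace ℝ E]
    {s : Set E} {f : E → ℝ} {f' : E →L[ℝ] ℝ} {x y : E} (hf : ConvexOn ℝ s f)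
    (hx : x ∈ s) (hy : y ∈ s) (hf' : HasFDerivAt f f' x) :
    f' (y - x) ≤ f y - f x := by
  let ℓ : ℝ →ᵃ[ℝ] E := AffineMap.lineMap x y
  have hφ : ConvexOn ℝ (ℓ ⁻¹' s) (f ∘ ℓ) := hf.comp_affineMap ℓ
  have hφ' : HasDerivAt (f ∘ ℓ) (f' (y - x)) 0 :=
    hf'.comp_hasDerivAt_of_eq 0 AffineMap.hasDerivAt_lineMap (AffineMap.lineMap_apply_zero x y).symm
  simpa [slope, ℓ] using
    hφ.le_slope_of_hasDerivAt (by simpa [ℓ]) (by simpa [ℓ]) one_pos hφ'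

theorem Matrix.sub_smul_inv_mulVec_dotProduct_mulVec {n R : Type*} [Fintype n] [DecidableEq n]
    [CommRing R] {A : Matrix n n R} (hA : A.IsSymm) (hdet : IsUnit A.det) (x g : n → R) (η : R) :
    (x - η • A⁻¹ *ᵥ g) ⬝ᵥ A *ᵥ (x - η • A⁻¹ *ᵥ g) =
      x ⬝ᵥ A *ᵥ x - 2 * η * (g ⬝ᵥ x) + η ^ 2 * (g ⬝ᵥ A⁻¹ *ᵥ g) := by
  have hAinv : A *ᵥ (A⁻¹ *ᵥ g) = g := by
    rw [mulVec_mulVec, mul_nonsing_inv A hdet, one_mulVec]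
  have hsymm : ∀ u v : n → R, u ⬝ᵥ A *ᵥ v = v ⬝ᵥ A *ᵥ u := fun u v => by
    rw [dotProduct_mulVec, ← mulVec_transpose, hA.eq, dotProduct_comm]
  rw [mulVec_sub, mulVec_smul, hAinv]
  simp only [sub_dotProduct, dotProduct_sub, smul_dotProduct, dotProduct_smul, smul_eq_mul]
  rw [hsymm (A⁻¹ *ᵥ g) x, hAinv, dotProduct_comm x g, dotProduct_comm (A⁻¹ *ᵥ g) g]
  ring

theorem ConvexOn.sub_le_of_preconditioned_step {n : Type*} [Fintype n] [DecidableEq n]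
    {f : (n → ℝ) → ℝ} {A : Matrix n n ℝ} {x g : n → ℝ} {η : ℝ} (hf : ConvexOn ℝ Set.univ f)
    (hfx : DifferentiableAt ℝ f x) (hg : ∀ v, fderiv ℝ f x v = g ⬝ᵥ v) (hA : A.IsSymm)
    (hdet : IsUnit A.det) (hη : η ≠ 0) (y : n → ℝ) :
    f x - f y ≤ (1 / (2 * η)) * ((x - y) ⬝ᵥ A *ᵥ (x - y) -
        (x - η • A⁻¹ *ᵥ g - y) ⬝ᵥ A *ᵥ (x - η • A⁻¹ *ᵥ g - y)) +
      (η / 2) * (g ⬝ᵥ A⁻¹ *ᵥ g) := by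
  have hgrad : f x - f y ≤ g ⬝ᵥ (x - y) := by
    have := hf.apply_sub_le_of_hasFDerivAt (Set.mem_univ x) (Set.mem_univ y) hfx.hasFDerivAt
    rw [hg, dotProduct_sub] at this
    rw [dotProduct_sub]
    linarith
  refine hgrad.trans_eq ?_
  rw [sub_right_comm, sub_smul_inv_mulVec_dotProduct_mulVec hA hdet]
  field_simp
  ring

/-- preconditioned online gradient descent regret decomposition.
For continuously differentiable convex `f_t`, positive definite `H_t`, and iterates
`w_{t+1} = w_t − η·H_t⁻¹ g_t` with `g_t = ∇f_t(w_t)`, the regret against any `w*`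
is bounded by the stated sum, where `‖x‖²_{H} = xᵀHx` and `(‖g‖*_{H})² = gᵀH⁻¹g`. -/
theorem preconditioned_gd_regret
    {d : ℕ} (T : ℕ)
    (f : ℕ → (Fin d → ℝ) → ℝ)
    (hconv : ∀ t, ConvexOn ℝ Set.univ (f t))
    (hdiff : ∀ t, ContDiff ℝ 1 (f t))
    (H : ℕ → Matrix (Fin d) (Fin d) ℝ)
    (hH : ∀ t, (H t).PosDef)
    (w g : ℕ → Fin d → ℝ)
    (η : ℝ) (hη : 0 < η)
    (hg : ∀ t, ∀ v : Fin d → ℝ, fderiv ℝ (f t) (w t) v = g t ⬝ᵥ v)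
    (hw : ∀ t, w (t + 1) = w t - η • (H t)⁻¹.mulVec (g t))
    (wstar : Fin d → ℝ) :
    ∑ t ∈ Finset.Icc 1 T, f t (w t) - ∑ t ∈ Finset.Icc 1 T, f t wstar ≤
      (1 / (2 * η)) * ∑ t ∈ Finset.Icc 1 T,
          ((w t - wstar) ⬝ᵥ (H t).mulVec (w t - wstar) -
            (w (t + 1) - wstar) ⬝ᵥ (H t).mulVec (w (t + 1) - wstar)) +
        (η / 2) * ∑ t ∈ Finset.Icc 1 T, g t ⬝ᵥ (H t)⁻¹.mulVec (g t) := by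
  rw [← Finset.sum_sub_distrib, Finset.mul_sum, Finset.mul_sum, ← Finset.sum_add_distrib]
  refine Finset.sum_le_sum fun t _ => ?_
  rw [hw t]
  exact (hconv t).sub_le_of_preconditioned_step ((hdiff t).differentiable one_ne_zero (w t))
    (hg t) (hH t).isHermitian.eq (hH t).det_pos.ne'.isUnit hη.ne' wstar
end

section
/- Let g_1,…,g_T be vectors in ℝ^d and let ρ > 0. Define Ĥ_t := (ρ·I + Σ_{s=1}^{t} g_s g_sᵀ)^{1/2} for t = 1,…,T. Then Σ_{t=1}^{T} (‖g_t‖*_{Ĥ_t})² ≤ 2·tr(Ĥ_T). -/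
/-!
Put `A = Ĥ_t` and `B = Ĥ_{t-1}`, so that `A² = B² + g_t g_tᵀ` and `A` is invertible because
`A² ≥ ρ I`. Then `g_tᵀ A⁻¹ g_t = tr (A⁻¹ (A² - B²)) = tr A - tr (A⁻¹ B²)`, while
`0 ≤ tr ((A - B) A⁻¹ (A - B)) = tr A - 2 tr B + tr (A⁻¹ B²)`. Adding the two gives
`g_tᵀ A⁻¹ g_t ≤ 2 (tr Ĥ_t - tr Ĥ_{t-1})`, which telescopes; finally `tr Ĥ_0 ≥ 0`.
-/

open Matrix

variable {n : Type*} [Fintype n]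

theorem trace_mul_vecMulVec_self (M : Matrix n n ℝ) (v : n → ℝ) :
    (M * vecMulVec v v).trace = v ⬝ᵥ M *ᵥ v := by
  rw [mul_vecMulVec, trace_vecMulVec, dotProduct_comm]

variable [DecidableEq n]

theorem dotProduct_inv_mulVec_le_two_mul_trace_sub {A B : Matrix n n ℝ} {v : n → ℝ}
    (hA : A.PosSemidef) (hB : B.PosSemidef) (hAu : IsUnit A)
    (hAB : A * A = B * B + vecMulVec v v) :
    v ⬝ᵥ A⁻¹ *ᵥ v ≤ 2 * (A.trace - B.trace) := by
  have hdet : IsUnit A.det := (isUnit_iff_isUnit_det A).mp hAu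
  have hquad : v ⬝ᵥ A⁻¹ *ᵥ v = A.trace - (A⁻¹ * (B * B)).trace := by
    rw [← trace_mul_vecMulVec_self, eq_sub_of_add_eq' hAB.symm, Matrix.mul_sub, trace_sub,
      ← Matrix.mul_assoc, nonsing_inv_mul A hdet, Matrix.one_mul]
  have hnonneg : 0 ≤ ((A - B)ᴴ * A⁻¹ * (A - B)).trace :=
    (hA.inv.conjTranspose_mul_mul_same (A - B)).trace_nonneg
  have hexpand : ((A - B)ᴴ * A⁻¹ * (A - B)).trace
      = A.trace - 2 * B.trace + (A⁻¹ * (B * B)).trace := by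
    rw [(hA.1.sub hB.1).eq]
    have h1 : (B * A⁻¹ * A).trace = B.trace := by
      rw [Matrix.mul_assoc, nonsing_inv_mul A hdet, Matrix.mul_one]
    have h2 : (A * A⁻¹ * B).trace = B.trace := by
      rw [mul_nonsing_inv A hdet, Matrix.one_mul]
    have h3 : (A * A⁻¹ * A).trace = A.trace := by
      rw [mul_nonsing_inv A hdet, Matrix.one_mul]
    have h4 : (B * A⁻¹ * B).trace = (A⁻¹ * (B * B)).trace := by
      rw [trace_mul_comm (B * A⁻¹), trace_mul_comm A⁻¹, Matrix.mul_assoc]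
    simp only [Matrix.sub_mul, Matrix.mul_sub, trace_sub, h1, h2, h3, h4]
    ring
  linarith

theorem sum_dotProduct_inv_mulVec_le_two_mul_trace_sub {H : ℕ → Matrix n n ℝ}
    {v : ℕ → n → ℝ} (hH : ∀ t, (H t).PosSemidef) (hHu : ∀ t, IsUnit (H t))
    (hstep : ∀ t, H (t + 1) * H (t + 1) = H t * H t + vecMulVec (v (t + 1)) (v (t + 1)))
    (T : ℕ) :
    ∑ t ∈ Finset.Icc 1 T, v t ⬝ᵥ (H t)⁻¹ *ᵥ v t ≤ 2 * ((H T).trace - (H 0).trace) := by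
  induction T with
  | zero => simp
  | succ T ih =>
    rw [Finset.sum_Icc_succ_top (by omega)]
    have := dotProduct_inv_mulVec_le_two_mul_trace_sub (hH (T + 1)) (hH T) (hHu (T + 1))
      (hstep T)
    linarith

/-- AdaGrad-type trace bound. With `Ĥ_t` the positive semidefinite square
root of `ρ·I + Σ_{s=1}^t g_s g_sᵀ` (`ρ > 0`), the sum of squared dual Mahalanobis norms
`Σ_t g_tᵀ Ĥ_t⁻¹ g_t` is at most `2·tr(Ĥ_T)`. -/
theorem dual_norm_sum_le_trace
    {d : ℕ} (T : ℕ) (g : ℕ → Fin d → ℝ) (ρ : ℝ) (hρ : 0 < ρ)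
    (Hhat : ℕ → Matrix (Fin d) (Fin d) ℝ)
    (hHhat : ∀ t, (Hhat t).PosSemidef ∧
      Hhat t * Hhat t =
        ρ • (1 : Matrix (Fin d) (Fin d) ℝ) +
          ∑ s ∈ Finset.Icc 1 t, Matrix.vecMulVec (g s) (g s)) :
    ∑ t ∈ Finset.Icc 1 T, g t ⬝ᵥ (Hhat t)⁻¹.mulVec (g t) ≤ 2 * (Hhat T).trace := by
  have hsq_posDef : ∀ t, (Hhat t * Hhat t).PosDef := fun t => by
    rw [(hHhat t).2]
    exact (PosDef.one.smul hρ).add_posSemidef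
      (posSemidef_sum _ fun s _ => by simpa using posSemidef_vecMulVec_self_star (g s))
  have hunit : ∀ t, IsUnit (Hhat t) := fun t => isUnit_of_mul_isUnit_left (hsq_posDef t).isUnit
  have hstep : ∀ t, Hhat (t + 1) * Hhat (t + 1)
      = Hhat t * Hhat t + vecMulVec (g (t + 1)) (g (t + 1)) := fun t => by
    rw [(hHhat (t + 1)).2, (hHhat t).2, Finset.sum_Icc_succ_top (by omega), add_assoc]
  have := sum_dotProduct_inv_mulVec_le_two_mul_trace_sub (fun t => (hHhat t).1) hunit hstep T
  linarith [(hHhat 0).1.trace_nonneg]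
end

section
/- Let G_1,…,G_T ∈ ℝ^{m×n} be matrices each of rank at most r, and let g_t := vec(G_t) ∈ ℝ^{mn} denote the row-stacking vectorization of G_t. Then for any ε ≥ 0: ε·I_{mn} + (1/r)·Σ_{t=1}^{T} g_t g_tᵀ ⪯ (ε·I_m + Σ_{t=1}^{T} G_t G_tᵀ)^{1/2} ⊗ (ε·I_n + Σ_{t=1}^{T} G_tᵀ G_t)^{1/2}. -/
/-!
Write `A := ε I + (1/r) Σ g_t g_tᵀ`.

If `P` is the orthogonal projection onto the row space of `G`, then `vec G = (G ⊗ I) vec P`, so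
Cauchy–Schwarz gives `g gᵀ ⪯ ‖P‖_F² (G Gᵀ ⊗ I)` with `‖P‖_F² = tr P = rank G`; symmetrically
`g gᵀ ⪯ rank G · (I ⊗ Gᵀ G)`. Summing over `t` yields `A ⪯ SL² ⊗ I` and `A ⪯ I ⊗ SR²`.

Two bounds by commuting squares combine into `A ⪯ SL ⊗ SR` (monotonicity of the geometric mean).
For invertible `SL`, `SR`, pair the eigen-equation `(SL ⊗ SR - A) v = λ v` with
`w = (SL ⊗ SR⁻¹) v`: both `⟨w, (SL ⊗ SR) v⟩` and `⟨w, (I ⊗ SR²) w⟩` equal `s := ⟨v, (SL² ⊗ I) v⟩`,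
so Cauchy–Schwarz for `A` gives `⟨w, A v⟩ ≤ s`, whence `λ ⟨v, w⟩ ≥ 0` with `⟨v, w⟩ > 0`.
The general case follows by replacing `SL`, `SR` with `SL + δ`, `SR + δ` and letting `δ → 0`.
-/

open Matrix
open scoped Kronecker MatrixOrder

theorem one_div_smul_le_of_le_smul {M : Type*} [AddCommMonoid M] [PartialOrder M] [Module ℝ M]
    [PosSMulMono ℝ M] [SMulPosMono ℝ M] {x y : M} {k r : ℕ} (hxy : x ≤ (k : ℝ) • y) (hy : 0 ≤ y)
    (hkr : k ≤ r) : (1 / (r : ℝ)) • x ≤ y := by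
  rcases r.eq_zero_or_pos with rfl | hr
  · simpa using hy
  calc (1 / (r : ℝ)) • x ≤ (1 / (r : ℝ)) • ((r : ℝ) • y) :=
        smul_le_smul_of_nonneg_left
          (hxy.trans (smul_le_smul_of_nonneg_right (by exact_mod_cast hkr) hy)) (by positivity)
    _ = y := by rw [smul_smul, one_div_mul_cancel (by positivity), one_smul]

namespace Matrix

section LoewnerOrder

variable {ι : Type*} [Fintype ι]

theorem dotProduct_mulVec_le_of_le {A B : Matrix ι ι ℝ} (h : A ≤ B) (x : ι → ℝ) :
    x ⬝ᵥ A *ᵥ x ≤ x ⬝ᵥ B *ᵥ x := by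
  simpa [sub_mulVec] using (le_iff.mp h).dotProduct_mulVec_nonneg x

theorem mulVec_dotProduct_of_transpose_eq {K : Matrix ι ι ℝ} (hK : Kᵀ = K) (x y : ι → ℝ) :
    (K *ᵥ x) ⬝ᵥ y = x ⬝ᵥ K *ᵥ y := by
  rw [← vecMul_transpose, ← dotProduct_mulVec, hK]

theorem PosSemidef.sq_dotProduct_mulVec_le {A : Matrix ι ι ℝ} (hA : A.PosSemidef) (x y : ι → ℝ) :
    (x ⬝ᵥ A *ᵥ y) ^ 2 ≤ (x ⬝ᵥ A *ᵥ x) * (y ⬝ᵥ A *ᵥ y) := by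
  classical
  have hCS := LinearMap.BilinForm.apply_mul_apply_le_of_forall_zero_le (toBilin' A)
    (fun z => by simpa [toBilin'_apply'] using hA.dotProduct_mulVec_nonneg z) x y
  have hA' : Aᵀ = A := by simpa using hA.isHermitian.eq
  rwa [toBilin'_apply', toBilin'_apply', toBilin'_apply', toBilin'_apply', dotProduct_comm y,
    mulVec_dotProduct_of_transpose_eq hA', ← sq] at hCS

theorem isClosed_setOf_posSemidef : IsClosed {A : Matrix ι ι ℝ | A.PosSemidef} := by
  have hset : {A : Matrix ι ι ℝ | A.PosSemidef} =
      {A | Aᴴ = A} ∩ ⋂ x : ι → ℝ, {A | 0 ≤ star x ⬝ᵥ A *ᵥ x} := by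
    ext A
    simp [posSemidef_iff_dotProduct_mulVec, IsHermitian]
  rw [hset]
  exact (isClosed_eq continuous_id.matrix_conjTranspose continuous_id).inter
    (isClosed_iInter fun x => isClosed_le continuous_const (by fun_prop))

variable [DecidableEq ι]

theorem vecMulVec_self_le_dotProduct_self_smul_one (x : ι → ℝ) :
    vecMulVec x x ≤ (x ⬝ᵥ x) • 1 := by
  rw [le_iff]
  refine PosSemidef.of_dotProduct_mulVec_nonneg ?_ fun y => ?_
  · ext i j
    simp [vecMulVec_apply, one_apply, eq_comm, mul_comm]
  · have hCS := (PosSemidef.one (n := ι) (R := ℝ)).sq_dotProduct_mulVec_le x y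
    simp only [one_mulVec] at hCS
    simpa [sub_mulVec, vecMulVec_mulVec, smul_mulVec, dotProduct_comm y x, sq, mul_comm] using hCS

theorem PosSemidef.mul_self_le_add_smul_one_mul_self {P : Matrix ι ι ℝ} (hP : P.PosSemidef)
    {δ : ℝ} (hδ : 0 ≤ δ) : P * P ≤ (P + δ • 1) * (P + δ • 1) := by
  have hexp : (P + δ • 1) * (P + δ • 1) - P * P = (2 * δ) • P + δ ^ 2 • (1 : Matrix ι ι ℝ) := by
    simp only [add_mul, mul_add, Matrix.smul_mul, Matrix.mul_smul, Matrix.one_mul, Matrix.mul_one,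
      smul_smul]
    module
  rw [le_iff, hexp]
  exact (hP.smul (by positivity)).add (PosSemidef.one.smul (by positivity))

end LoewnerOrder

variable {m n : Type*} [Fintype m] [Fintype n]

section Kronecker

theorem sum_kronecker {R ι l p q r : Type*} [CommSemiring R] (s : Finset ι)
    (X : ι → Matrix l p R) (Y : Matrix q r R) : (∑ i ∈ s, X i) ⊗ₖ Y = ∑ i ∈ s, X i ⊗ₖ Y :=
  map_sum ((kroneckerBilinear (R := R)).flip Y) X s

theorem kronecker_sum {R ι l p q r : Type*} [CommSemiring R] (s : Finset ι)
    (X : Matrix l p R) (Y : ι → Matrix q r R) : X ⊗ₖ (∑ i ∈ s, Y i) = ∑ i ∈ s, X ⊗ₖ Y i :=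
  map_sum (kroneckerBilinear (R := R) X) Y s

variable {𝕜 : Type*} [RCLike 𝕜] {X Y : Matrix m m 𝕜} {Z : Matrix n n 𝕜}

theorem kronecker_le_kronecker_of_nonneg_right (h : X ≤ Y) (hZ : 0 ≤ Z) : X ⊗ₖ Z ≤ Y ⊗ₖ Z := by
  have hsub : (Y - X) ⊗ₖ Z = Y ⊗ₖ Z - X ⊗ₖ Z := (kroneckerBilinear (R := 𝕜)).map_sub₂ Y X Z
  rw [le_iff, ← hsub]
  exact (le_iff.mp h).kronecker hZ.posSemidef

theorem kronecker_le_kronecker_of_nonneg_left (h : X ≤ Y) (hZ : 0 ≤ Z) : Z ⊗ₖ X ≤ Z ⊗ₖ Y := by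
  have hsub : Z ⊗ₖ (Y - X) = Z ⊗ₖ Y - Z ⊗ₖ X := (kroneckerBilinear (R := 𝕜) Z).map_sub Y X
  rw [le_iff, ← hsub]
  exact hZ.posSemidef.kronecker (le_iff.mp h)

end Kronecker

theorem vecMulVec_mulVec_le [DecidableEq n] (M : Matrix m n ℝ) (x : n → ℝ) :
    vecMulVec (M *ᵥ x) (M *ᵥ x) ≤ (x ⬝ᵥ x) • (M * Mᵀ) := by
  rw [le_iff]
  convert (le_iff.mp (vecMulVec_self_le_dotProduct_self_smul_one x)).mul_mul_conjTranspose_same M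
    using 1
  rw [Matrix.mul_sub, Matrix.sub_mul, mul_vecMulVec, vecMulVec_mul,
    conjTranspose_eq_transpose_of_trivial, vecMul_transpose, Matrix.mul_smul, Matrix.mul_one,
    Matrix.smul_mul]

/-- `P` is the orthogonal projection onto the column space of `A`: writing
`A Aᵀ = U diag(μ) Uᵀ`, it is `U diag(1_{μ ≠ 0}) Uᵀ`. -/
theorem exists_transpose_eq_idempotent_mul_eq_self_trace_eq_rank [DecidableEq m]
    (A : Matrix m n ℝ) :
    ∃ P : Matrix m m ℝ, Pᵀ = P ∧ P * P = P ∧ P * A = A ∧ P.trace = A.rank := by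
  have hH : (A * Aᵀ).IsHermitian := by
    simpa using isHermitian_mul_conjTranspose_self A
  set U : Matrix m m ℝ := ↑hH.eigenvectorUnitary
  have hUU : star U * U = 1 := Unitary.coe_star_mul_self _
  have hUU' : U * star U = 1 := Unitary.coe_mul_star_self _
  have hdiag : star U * (A * Aᵀ) * U = diagonal hH.eigenvalues := by
    have h := hH.conjStarAlgAut_star_eigenvectorUnitary
    rwa [Unitary.conjStarAlgAut_apply, Unitary.coe_star, star_star, RCLike.ofReal_real_eq_id,
      Function.id_comp] at h
  set d : m → ℝ := fun k => if hH.eigenvalues k = 0 then 0 else 1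
  have hd : diagonal d * diagonal d = diagonal d := by
    rw [diagonal_mul_diagonal]
    congr 1
    funext k
    by_cases hk : hH.eigenvalues k = 0 <;> simp [d, hk]
  refine ⟨U * diagonal d * star U, ?_, ?_, ?_, ?_⟩
  · simp [Matrix.transpose_mul, star_eq_conjTranspose, Matrix.mul_assoc]
  · calc U * diagonal d * star U * (U * diagonal d * star U)
        = U * (diagonal d * (star U * U) * diagonal d) * star U := by simp only [Matrix.mul_assoc]
      _ = U * diagonal d * star U := by rw [hUU, Matrix.mul_one, hd, Matrix.mul_assoc]
  · have hN : (1 - diagonal d) * (star U * A) = 0 := by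
      rw [← self_mul_conjTranspose_eq_zero]
      calc (1 - diagonal d) * (star U * A) * ((1 - diagonal d) * (star U * A))ᴴ
          = (1 - diagonal d) * (star U * (A * Aᵀ) * U) * (1 - diagonal d) := by
            simp [Matrix.mul_assoc, star_eq_conjTranspose]
        _ = 0 := by
          rw [hdiag, ← diagonal_one, diagonal_sub, diagonal_mul_diagonal, diagonal_mul_diagonal,
            ← diagonal_zero]
          congr 1
          funext k
          by_cases hk : hH.eigenvalues k = 0 <;> simp [d, hk]
    rw [Matrix.sub_mul, Matrix.one_mul, sub_eq_zero] at hN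
    rw [Matrix.mul_assoc, Matrix.mul_assoc, ← hN, ← Matrix.mul_assoc, hUU', Matrix.one_mul]
  · rw [trace_mul_comm, ← Matrix.mul_assoc, hUU, Matrix.one_mul, trace_diagonal,
      ← rank_self_mul_transpose, hH.rank_eq_card_non_zero_eigs, Fintype.card_subtype,
      ← Finset.sum_boole]
    exact Finset.sum_congr rfl fun k _ => by by_cases hk : hH.eigenvalues k = 0 <;> simp [d, hk]

/-- `vec Gᵀ` is the row-stacking vectorization `(i, j) ↦ G i j`. -/
theorem vecMulVec_vec_transpose_le_rank_smul_kronecker_one [DecidableEq n] (G : Matrix m n ℝ) :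
    vecMulVec (vec Gᵀ) (vec Gᵀ) ≤ (G.rank : ℝ) • ((G * Gᵀ) ⊗ₖ (1 : Matrix n n ℝ)) := by
  obtain ⟨P, hPt, hPP, hPG, hPtr⟩ := exists_transpose_eq_idempotent_mul_eq_self_trace_eq_rank Gᵀ
  have hg : vec Gᵀ = (G ⊗ₖ 1) *ᵥ vec P := by rw [kronecker_mulVec_vec, Matrix.one_mul, hPG]
  have hp : vec P ⬝ᵥ vec P = G.rank := by
    rw [vec_dotProduct_vec, hPt, hPP, hPtr, rank_transpose]
  rw [hg, ← hp]
  refine (vecMulVec_mulVec_le (G ⊗ₖ 1) (vec P)).trans_eq ?_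
  rw [← kroneckerMap_transpose, ← mul_kronecker_mul, transpose_one, Matrix.mul_one]

theorem vecMulVec_vec_transpose_le_rank_smul_one_kronecker [DecidableEq m] (G : Matrix m n ℝ) :
    vecMulVec (vec Gᵀ) (vec Gᵀ) ≤ (G.rank : ℝ) • ((1 : Matrix m m ℝ) ⊗ₖ (Gᵀ * G)) := by
  obtain ⟨P, hPt, hPP, hPG, hPtr⟩ := exists_transpose_eq_idempotent_mul_eq_self_trace_eq_rank G
  have hg : vec Gᵀ = (1 ⊗ₖ Gᵀ) *ᵥ vec P := by
    rw [kronecker_mulVec_vec, transpose_one, Matrix.mul_one, ← hPt, ← transpose_mul, hPG]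
  have hp : vec P ⬝ᵥ vec P = G.rank := by
    rw [vec_dotProduct_vec, hPt, hPP, hPtr]
  rw [hg, ← hp]
  refine (vecMulVec_mulVec_le (1 ⊗ₖ Gᵀ) (vec P)).trans_eq ?_
  rw [← kroneckerMap_transpose, ← mul_kronecker_mul, transpose_one, Matrix.mul_one,
    transpose_transpose]

variable [DecidableEq m] [DecidableEq n]

theorem le_kronecker_of_posDef {A : Matrix (m × n) (m × n) ℝ} {P : Matrix m m ℝ}
    {Q : Matrix n n ℝ} (hP : P.PosDef) (hQ : Q.PosDef) (hA : 0 ≤ A)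
    (hAP : A ≤ (P * P) ⊗ₖ 1) (hAQ : A ≤ 1 ⊗ₖ (Q * Q)) : A ≤ P ⊗ₖ Q := by
  have hM : (P ⊗ₖ Q - A).IsHermitian :=
    (hP.posSemidef.kronecker hQ.posSemidef).isHermitian.sub hA.posSemidef.isHermitian
  rw [le_iff, hM.posSemidef_iff_eigenvalues_nonneg]
  intro i
  set v : m × n → ℝ := ⇑(hM.eigenvectorBasis i)
  have hv : (P ⊗ₖ Q - A) *ᵥ v = hM.eigenvalues i • v := hM.mulVec_eigenvectorBasis i
  have hv0 : v ≠ 0 := (WithLp.ofLp_eq_zero 2).ne.2 <| hM.eigenvectorBasis.orthonormal.ne_zero i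
  set K := P ⊗ₖ Q⁻¹
  have hK : K.PosDef := hP.kronecker hQ.inv
  have hKt : Kᵀ = K := by simpa using hK.isHermitian.eq
  have hQ₁ : Q⁻¹ * Q = 1 := nonsing_inv_mul Q ((isUnit_iff_isUnit_det _).mp hQ.isUnit)
  have hQ₂ : Q * Q⁻¹ = 1 := mul_nonsing_inv Q ((isUnit_iff_isUnit_det _).mp hQ.isUnit)
  have hKPQ : K * (P ⊗ₖ Q) = (P * P) ⊗ₖ 1 := by rw [← mul_kronecker_mul, hQ₁]
  have hKQK : K * (1 ⊗ₖ (Q * Q)) * K = (P * P) ⊗ₖ 1 := by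
    rw [← mul_kronecker_mul, ← mul_kronecker_mul, Matrix.mul_one, ← Matrix.mul_assoc, hQ₁,
      Matrix.one_mul, hQ₂]
  set w := K *ᵥ v
  set s := v ⬝ᵥ ((P * P) ⊗ₖ 1) *ᵥ v
  have hwPQ : w ⬝ᵥ (P ⊗ₖ Q) *ᵥ v = s := by
    rw [mulVec_dotProduct_of_transpose_eq hKt, mulVec_mulVec, hKPQ]
  have hwQ : w ⬝ᵥ (1 ⊗ₖ (Q * Q)) *ᵥ w = s := by
    rw [mulVec_dotProduct_of_transpose_eq hKt, mulVec_mulVec, mulVec_mulVec, hKQK]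
  have hwA : w ⬝ᵥ A *ᵥ v ≤ s := by
    have hv_le := dotProduct_mulVec_le_of_le hAP v
    have hw_le := (dotProduct_mulVec_le_of_le hAQ w).trans_eq hwQ
    have hv_nonneg : 0 ≤ v ⬝ᵥ A *ᵥ v := by simpa using hA.posSemidef.dotProduct_mulVec_nonneg v
    have hw_nonneg : 0 ≤ w ⬝ᵥ A *ᵥ w := by simpa using hA.posSemidef.dotProduct_mulVec_nonneg w
    refine (abs_le_of_sq_le_sq' ((hA.posSemidef.sq_dotProduct_mulVec_le w v).trans ?_)
      (hv_nonneg.trans hv_le)).2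
    rw [sq]
    exact mul_le_mul hw_le hv_le hv_nonneg (hw_nonneg.trans hw_le)
  have heig : hM.eigenvalues i * (v ⬝ᵥ K *ᵥ v) = s - w ⬝ᵥ A *ᵥ v := by
    rw [← mulVec_dotProduct_of_transpose_eq hKt, ← smul_eq_mul, ← dotProduct_smul, ← hv,
      sub_mulVec, dotProduct_sub, hwPQ]
  exact nonneg_of_mul_nonneg_left (heig ▸ sub_nonneg.mpr hwA) (hK.dotProduct_mulVec_pos hv0)

theorem le_kronecker_of_posSemidef {A : Matrix (m × n) (m × n) ℝ}
    {P : Matrix m m ℝ} {Q : Matrix n n ℝ} (hP : P.PosSemidef) (hQ : Q.PosSemidef) (hA : 0 ≤ A)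
    (hAP : A ≤ (P * P) ⊗ₖ 1) (hAQ : A ≤ 1 ⊗ₖ (Q * Q)) : A ≤ P ⊗ₖ Q := by
  set f : ℝ → Matrix (m × n) (m × n) ℝ := fun δ => (P + δ • 1) ⊗ₖ (Q + δ • 1) - A
  have hf : Continuous f := by
    refine continuous_pi fun p => continuous_pi fun q => ?_
    simp only [f, sub_apply, kroneckerMap_apply]
    fun_prop
  have hpos : ∀ δ > 0, (f δ).PosSemidef := fun δ hδ => by
    refine le_iff.mp (le_kronecker_of_posDef (PosDef.posSemidef_add hP (PosDef.one.smul hδ))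
      (PosDef.posSemidef_add hQ (PosDef.one.smul hδ)) hA (hAP.trans ?_) (hAQ.trans ?_))
    · exact kronecker_le_kronecker_of_nonneg_right (hP.mul_self_le_add_smul_one_mul_self hδ.le)
        PosSemidef.one.nonneg
    · exact kronecker_le_kronecker_of_nonneg_left (hQ.mul_self_le_add_smul_one_mul_self hδ.le)
        PosSemidef.one.nonneg
  have h0 := isClosed_setOf_posSemidef.mem_of_tendsto
    ((hf.tendsto 0).mono_left nhdsWithin_le_nhds)
    (eventually_nhdsWithin_of_forall (s := Set.Ioi 0) hpos)
  exact le_iff.mpr (by simpa [f] using h0)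

end Matrix

/-- Shampoo Kronecker-product bound. For matrices `G_t` of rank at most `r`
with row-stacking vectorizations `g_t`, and `SL`, `SR` the positive semidefinite square roots
of `ε·I_m + Σ G_t G_tᵀ` and `ε·I_n + Σ G_tᵀ G_t`, we have
`ε·I_{mn} + (1/r)·Σ g_t g_tᵀ ⪯ SL ⊗ SR`. -/
theorem shampoo_kronecker_bound
    {m n : ℕ} (T r : ℕ) (G : ℕ → Matrix (Fin m) (Fin n) ℝ)
    (hrank : ∀ t, (G t).rank ≤ r)
    (ε : ℝ) (hε : 0 ≤ ε)
    (SL : Matrix (Fin m) (Fin m) ℝ) (SR : Matrix (Fin n) (Fin n) ℝ)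
    (hSL : SL.PosSemidef ∧
      SL * SL = ε • (1 : Matrix (Fin m) (Fin m) ℝ) +
        ∑ t ∈ Finset.Icc 1 T, G t * (G t)ᵀ)
    (hSR : SR.PosSemidef ∧
      SR * SR = ε • (1 : Matrix (Fin n) (Fin n) ℝ) +
        ∑ t ∈ Finset.Icc 1 T, (G t)ᵀ * G t) :
    (SL ⊗ₖ SR -
      (ε • (1 : Matrix (Fin m × Fin n) (Fin m × Fin n) ℝ) +
        (1 / (r : ℝ)) • ∑ t ∈ Finset.Icc 1 T,
          Matrix.vecMulVec (fun p : Fin m × Fin n => G t p.1 p.2)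
            (fun p : Fin m × Fin n => G t p.1 p.2))).PosSemidef := by
  obtain ⟨hSL, hSLsq⟩ := hSL
  obtain ⟨hSR, hSRsq⟩ := hSR
  have hGGt : ∀ t, (G t * (G t)ᵀ).PosSemidef := fun t => by
    simpa using posSemidef_self_mul_conjTranspose (G t)
  have hGtG : ∀ t, ((G t)ᵀ * G t).PosSemidef := fun t => by
    simpa using posSemidef_conjTranspose_mul_self (G t)
  rw [← le_iff]
  refine le_kronecker_of_posSemidef hSL hSR ?_ ?_ ?_
  · exact add_nonneg (smul_nonneg hε PosSemidef.one.nonneg) (smul_nonneg (by positivity)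
      (Finset.sum_nonneg fun t _ => (posSemidef_vecMulVec_self_star _).nonneg))
  · rw [hSLsq, add_kronecker, smul_kronecker, one_kronecker_one, sum_kronecker, Finset.smul_sum]
    gcongr with t
    exact one_div_smul_le_of_le_smul (vecMulVec_vec_transpose_le_rank_smul_kronecker_one (G t))
      ((hGGt t).kronecker PosSemidef.one).nonneg (hrank t)
  · rw [hSRsq, kronecker_add, kronecker_smul, one_kronecker_one, kronecker_sum, Finset.smul_sum]
    gcongr with t
    exact one_div_smul_le_of_le_smul (vecMulVec_vec_transpose_le_rank_smul_one_kronecker (G t))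
      (PosSemidef.one.kronecker (hGtG t)).nonneg (hrank t)
end

section
/- Let c ≥ 1, t > 0 with tc ≥ 1, s < 0, and l > 0. Then the cosine quantity h₂(l) := (l·t^s + c^s)/√((1 + l·t^{2s})(l + c^{2s})) satisfies h₂(l) ≥ √(l·t^{2s} / (1 + l·t^{2s})). -/
/-- For `c ≥ 1`, `t > 0` with `tc ≥ 1`, `s < 0` and `l > 0`, the cosine
`h₂(l) = (l·t^s + c^s)/√((1 + l·t^{2s})(l + c^{2s}))` is at least
`√(l·t^{2s}/(1 + l·t^{2s}))`. -/
theorem h2_lower_bound (c t s l : ℝ) (hc : 1 ≤ c) (ht : 0 < t) (htc : 1 ≤ t * c)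
    (hs : s < 0) (hl : 0 < l) :
    Real.sqrt (l * t ^ (2 * s) / (1 + l * t ^ (2 * s))) ≤
      (l * t ^ s + c ^ s) / Real.sqrt ((1 + l * t ^ (2 * s)) * (l + c ^ (2 * s))) := by
  have hc0 : (0:ℝ) < c := lt_of_lt_of_le one_pos hc
  have hts : 0 < t ^ s := Real.rpow_pos_of_pos ht s
  have hcs : 0 < c ^ s := Real.rpow_pos_of_pos hc0 s
  have h2t : t ^ (2 * s) = t ^ s * t ^ s := by rw [two_mul, Real.rpow_add ht]
  have h2c : c ^ (2 * s) = c ^ s * c ^ s := by rw [two_mul, Real.rpow_add hc0]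
  have hx : t ^ s * c ^ s ≤ 1 := by
    rw [← Real.mul_rpow ht.le hc0.le]
    exact Real.rpow_le_one_of_one_le_of_nonpos htc hs.le
  have hA : 0 < 1 + l * t ^ (2 * s) := by rw [h2t]; nlinarith
  have hB : 0 < l + c ^ (2 * s) := by rw [h2c]; nlinarith
  have hN : 0 < l * t ^ s + c ^ s := by nlinarith
  have hkey : l * t ^ (2 * s) * (l + c ^ (2 * s)) ≤ (l * t ^ s + c ^ s) ^ 2 := by
    rw [h2t, h2c]
    nlinarith [mul_nonneg (mul_pos hl (mul_pos hts hcs)).le (sub_nonneg.2 hx),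
      sq_nonneg (c ^ s)]
  have hrhs : (l * t ^ s + c ^ s) / Real.sqrt ((1 + l * t ^ (2 * s)) * (l + c ^ (2 * s)))
      = Real.sqrt ((l * t ^ s + c ^ s) ^ 2 / ((1 + l * t ^ (2 * s)) * (l + c ^ (2 * s)))) := by
    rw [Real.sqrt_div (sq_nonneg _), Real.sqrt_sq hN.le]
  rw [hrhs]
  apply Real.sqrt_le_sqrt
  rw [div_le_div_iff₀ hA (mul_pos hA hB)]
  nlinarith [mul_le_mul_of_nonneg_right hkey hA.le,
    mul_pos (Real.rpow_pos_of_pos ht (2*s)) hl]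
end

section
/- Let A be an n×n real positive definite matrix with SVD A = UΛUᵀ, where U = [u_1,…,u_n] is orthogonal and Λ = diag(λ_1,…,λ_n) with all λ_i > 0. Let ΔU = [Δu_i] be such that U + ΔU is orthogonal and ⟨u_i, u_i + Δu_i⟩ ≥ 1 − β ≥ 0 for all i. Let s ∈ ℝ, B := (UΛUᵀ)^s, and ΔB := ((U+ΔU)Λ(U+ΔU)ᵀ)^s − B. Then ⟨B, ΔB⟩ ≥ ((1−β)² − 1)·‖B‖_F². -/
open Matrix

/-! With `B' := (U + ΔU) Λˢ (U + ΔU)ᵀ` and `W := Uᵀ(U + ΔU)`, the cross term `⟨B, B'⟩`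
equals `∑ᵢⱼ λᵢˢ λⱼˢ Wᵢⱼ²`, while `‖B‖_F² = ∑ᵢ λᵢ²ˢ` because `U` is orthogonal. All terms
are nonnegative, so dropping the off-diagonal ones and using `Wᵢᵢ ≥ 1 - β ≥ 0` gives
`⟨B, B'⟩ ≥ (1 - β)² ‖B‖_F²`. -/

theorem frobNorm_sq_eq_frobInner_self {m n : Type*} [Fintype m] [Fintype n]
    (A : Matrix m n ℝ) : frobNorm A ^ 2 = frobInner A A := by
  rw [frobNorm, Real.sq_sqrt (by positivity), frobInner, Finset.sum_comm]
  simp only [trace, diag, mul_apply, transpose_apply, sq]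

theorem frobInner_sub_right {m n : Type*} [Fintype m] [Fintype n] (A B C : Matrix m n ℝ) :
    frobInner A (B - C) = frobInner A B - frobInner A C := by
  rw [frobInner, frobInner, frobInner, Matrix.mul_sub, trace_sub]

section Diagonal

variable {ι : Type*} [Fintype ι] [DecidableEq ι]

theorem trace_diagonal_mul_mul_diagonal_mul_transpose (d e : ι → ℝ) (W : Matrix ι ι ℝ) :
    (diagonal d * W * diagonal e * Wᵀ).trace = ∑ i, ∑ j, d i * e j * W i j ^ 2 := by
  have hentry : ∀ i j, (diagonal d * W * diagonal e) i j = d i * W i j * e j := fun i j => by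
    rw [mul_diagonal, diagonal_mul]
  simp only [trace, diag, mul_apply (N := Wᵀ), transpose_apply, hentry]
  exact Finset.sum_congr rfl fun i _ => Finset.sum_congr rfl fun j _ => by ring

theorem frobInner_conj_diagonal {m : Type*} [Fintype m] (U V : Matrix m ι ℝ) (d e : ι → ℝ) :
    frobInner (U * diagonal d * Uᵀ) (V * diagonal e * Vᵀ)
      = ∑ i, ∑ j, d i * e j * (Uᵀ * V) i j ^ 2 := by
  rw [← trace_diagonal_mul_mul_diagonal_mul_transpose, frobInner]
  simp only [transpose_mul, transpose_transpose, diagonal_transpose, Matrix.mul_assoc]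
  rw [trace_mul_comm]
  simp only [Matrix.mul_assoc]

theorem frobNorm_sq_conj_diagonal_of_orthogonal {U : Matrix ι ι ℝ} (hU : Uᵀ * U = 1)
    (d : ι → ℝ) : frobNorm (U * diagonal d * Uᵀ) ^ 2 = ∑ i, d i ^ 2 := by
  rw [frobNorm_sq_eq_frobInner_self, frobInner_conj_diagonal, hU]
  refine Finset.sum_congr rfl fun i _ => ?_
  rw [Finset.sum_eq_single i (fun j _ hji => by simp [one_apply_ne' hji]) (by simp)]
  simp [sq]

end Diagonal

theorem sq_mul_sum_sq_le_sum_mul_mul_sq {ι : Type*} [Fintype ι] {d : ι → ℝ}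
    (hd : ∀ i, 0 ≤ d i) {W : Matrix ι ι ℝ} {c : ℝ} (hc : 0 ≤ c) (hW : ∀ i, c ≤ W i i) :
    c ^ 2 * ∑ i, d i ^ 2 ≤ ∑ i, ∑ j, d i * d j * W i j ^ 2 := by
  rw [Finset.mul_sum]
  refine Finset.sum_le_sum fun i _ => ?_
  calc c ^ 2 * d i ^ 2 ≤ d i * d i * W i i ^ 2 := by
        rw [← sq, mul_comm]
        gcongr
        exact hW i
    _ ≤ ∑ j, d i * d j * W i j ^ 2 :=
        Finset.single_le_sum (f := fun j => d i * d j * W i j ^ 2)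
          (fun j _ => by have := hd i; have := hd j; positivity) (Finset.mem_univ i)

theorem frobInner_perturbation_lower_bound_general
    {n : ℕ} (U ΔU : Matrix (Fin n) (Fin n) ℝ) (lam : Fin n → ℝ)
    (hlam : ∀ i, 0 < lam i)
    (hU : Uᵀ * U = 1)
    (s β : ℝ)
    (hβ : ∀ i, 1 - β ≤ ∑ j, U j i * (U j i + ΔU j i))
    (hβ0 : 0 ≤ 1 - β)
    (B ΔB : Matrix (Fin n) (Fin n) ℝ)
    (hB : B = U * Matrix.diagonal (fun i => lam i ^ s) * Uᵀ)
    (hΔB : ΔB = (U + ΔU) * Matrix.diagonal (fun i => lam i ^ s) * (U + ΔU)ᵀ - B) :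
    ((1 - β) ^ 2 - 1) * (frobNorm B) ^ 2 ≤ frobInner B ΔB := by
  have hd : ∀ i, 0 ≤ lam i ^ s := fun i => (Real.rpow_pos_of_pos (hlam i) s).le
  have hW : ∀ i, 1 - β ≤ (Uᵀ * (U + ΔU)) i i := by
    simpa only [mul_apply, transpose_apply, Matrix.add_apply] using hβ
  have hnorm := frobNorm_sq_conj_diagonal_of_orthogonal hU fun i => lam i ^ s
  have hcross := sq_mul_sum_sq_le_sum_mul_mul_sq hd hβ0 hW
  rw [hΔB, frobInner_sub_right, ← frobNorm_sq_eq_frobInner_self, hB, frobInner_conj_diagonal,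
    hnorm]
  linarith

/-- Under an orthogonal perturbation `U + ΔU` with
`⟨u_i, u_i + Δu_i⟩ ≥ 1 − β ≥ 0`, the Frobenius inner product `⟨B, ΔB⟩` is bounded below by
`((1−β)² − 1)·‖B‖_F²`. -/
theorem frobInner_perturbation_lower_bound
    {n : ℕ} (A U ΔU : Matrix (Fin n) (Fin n) ℝ) (lam : Fin n → ℝ)
    (hA : A = U * Matrix.diagonal lam * Uᵀ)
    (hApd : A.PosDef)
    (hlam : ∀ i, 0 < lam i)
    (hU : Uᵀ * U = 1)
    (hU' : (U + ΔU)ᵀ * (U + ΔU) = 1)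
    (s β : ℝ)
    (hβ : ∀ i, 1 - β ≤ ∑ j, U j i * (U j i + ΔU j i))
    (hβ0 : 0 ≤ 1 - β)
    (B ΔB : Matrix (Fin n) (Fin n) ℝ)
    (hB : B = U * Matrix.diagonal (fun i => lam i ^ s) * Uᵀ)
    (hΔB : ΔB = (U + ΔU) * Matrix.diagonal (fun i => lam i ^ s) * (U + ΔU)ᵀ - B) :
    ((1 - β) ^ 2 - 1) * (frobNorm B) ^ 2 ≤ frobInner B ΔB :=
  frobInner_perturbation_lower_bound_general U ΔU lam hlam hU s β hβ hβ0 B ΔB hB hΔB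
end
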